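/- arXiv:2203.02998 — 6 statements merged into one kernel-verified Lean document; each statement's English description precedes it below -/
import Mathlib

section
/- Let A be a 2×2 real symplectic matrix (det A = 1). The family {N^k : k ∈ ℤ} is bounded for every symplectic N in some neighborhood of A if and only if the eigenvalues of A lie in S¹ \ {±1} (equivalently |tr A| < 2). -/
/-!
For `det N = 1` Cayley–Hamilton reads `N * N = t • N - 1` with `t = tr N`, hence
`N ^ k = S (k - 1) (t) • N - S (k - 2) (t) • 1` for all `k : ℤ`, where `S` are the rescaled
Chebyshev polynomials of the second kind, and `tr (N ^ k) = C k (t)`.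

If `|t| < 2`, the identity `S n ^ 2 + S (n + 1) ^ 2 - t * S n * S (n + 1) = 1` is a positive
definite quadratic form in `(S n, S (n + 1))`, so `S n (t)` is bounded uniformly in `n`; since
`|tr N| < 2` is an open condition, `A` is strongly stable. If `|t| > 2`, the traces `C k (t)` grow
at least linearly, so the powers are unbounded. If `|tr A| ≥ 2`, the traces of
`A * diagonal ![s, s⁻¹]` and `A * diagonal ![s⁻¹, s]` add up to `tr A * (s + s⁻¹)`, of absolute
value `> 4` for `s ≠ 1`, so `A` is a limit of matrices of determinant one with unbounded powers.

The eigenvalues of `A` are the roots of `μ ^ 2 - t * μ + 1`; they lie on `S¹ \ {±1}` exactly when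
the discriminant `t ^ 2 - 4` is negative.
-/

open Matrix Polynomial Polynomial.Chebyshev Filter Topology

namespace Polynomial.Chebyshev

theorem sq_S_eval_le {t : ℝ} (ht : t ^ 2 < 4) (n : ℤ) :
    (S ℝ n).eval t ^ 2 ≤ 4 / (4 - t ^ 2) := by
  have key := congrArg (eval t) (S_sq_add_S_sq ℝ n)
  simp only [eval_sub, eval_add, eval_pow, eval_mul, eval_X, eval_one] at key
  rw [le_div_iff₀ (by linarith)]
  nlinarith [sq_nonneg (2 * (S ℝ (n + 1)).eval t - t * (S ℝ n).eval t)]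

theorem abs_S_eval_le {t : ℝ} (ht : t ^ 2 < 4) (n : ℤ) :
    |(S ℝ n).eval t| ≤ √(4 / (4 - t ^ 2)) :=
  Real.abs_le_sqrt (sq_S_eval_le ht n)

theorem two_add_mul_le_abs_C_eval {t : ℝ} (ht : 2 ≤ |t|) (n : ℕ) :
    2 + n * (|t| - 2) ≤ |(C ℝ n).eval t| := by
  suffices ∀ n : ℕ, 2 + n * (|t| - 2) ≤ |(C ℝ n).eval t| ∧
      |(C ℝ n).eval t| + (|t| - 2) ≤ |(C ℝ (n + 1)).eval t| from (this n).1
  intro n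
  induction n with
  | zero => simp [C_zero, C_one]
  | succ n ih =>
    obtain ⟨ih₁, ih₂⟩ := ih
    have hrec : (C ℝ (n + 2)).eval t = t * (C ℝ (n + 1)).eval t - (C ℝ n).eval t := by
      simp [C_add_two]
    have hgrow : |t| * |(C ℝ (n + 1)).eval t| - |(C ℝ n).eval t| ≤ |(C ℝ (n + 2)).eval t| := by
      rw [hrec, ← abs_mul]; exact abs_sub_abs_le_abs_sub _ _
    push_cast
    refine ⟨by linarith, ?_⟩
    rw [show (n : ℤ) + 1 + 1 = n + 2 by ring]
    nlinarith [abs_nonneg ((C ℝ (n + 1)).eval t)]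

end Polynomial.Chebyshev

namespace Matrix

variable {m R : Type*} [Fintype m] [DecidableEq m] [CommRing R]

theorem mul_self_fin_two (M : Matrix (Fin 2) (Fin 2) R) : M * M = M.trace • M - M.det • 1 := by
  ext i j
  fin_cases i <;> fin_cases j <;>
    simp [mul_apply, trace_fin_two, det_fin_two] <;> ring

theorem zpow_eq_S_eval_smul_sub {A : Matrix m m R} {t : R} (hA : A * A = t • A - 1) (k : ℤ) :
    A ^ k = (S R (k - 1)).eval t • A - (S R (k - 2)).eval t • 1 := by
  have hinv : A * (t • 1 - A) = 1 := by rw [Matrix.mul_sub, Matrix.mul_smul, mul_one, hA]; abel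
  have hdet : IsUnit A.det := isUnit_det_of_right_inverse hinv
  induction k using Int.induction_on with
  | zero => simp [S_neg_one, S_neg_two]
  | succ k ih =>
    rw [zpow_add_one hdet, ih, sub_mul, smul_mul_assoc, smul_mul_assoc, hA, one_mul,
      add_sub_cancel_right, show (k : ℤ) + 1 - 2 = k - 1 by ring, S_eq R k]
    simp only [eval_sub, eval_mul, eval_X]
    module
  | pred k ih =>
    rw [zpow_sub_one hdet, inv_eq_right_inv hinv, ih, sub_mul, smul_mul_assoc, smul_mul_assoc,
      Matrix.mul_sub, Matrix.mul_smul, hA, one_mul, show -(k : ℤ) - 1 - 1 = -k - 2 by ring,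
      show -(k : ℤ) - 1 - 2 = -k - 2 - 1 by ring, S_sub_one R (-k - 2),
      show -(k : ℤ) - 2 + 1 = -k - 1 by ring, mul_one]
    simp only [eval_sub, eval_mul, eval_X]
    module

theorem trace_zpow_eq_C_eval {A : Matrix (Fin 2) (Fin 2) R} (hA : A.det = 1) (k : ℤ) :
    (A ^ k).trace = (C R k).eval A.trace := by
  rw [zpow_eq_S_eval_smul_sub (by rw [mul_self_fin_two, hA, one_smul]), trace_sub, trace_smul,
    trace_smul, trace_one, C_eq_S_sub_X_mul_S, S_eq R k]
  simp only [eval_sub, eval_mul, eval_X, eval_ofNat, Fintype.card_fin, smul_eq_mul]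
  push_cast
  ring

end Matrix

theorem Matrix.abs_one_apply_le_one {m : Type*} [DecidableEq m] (i j : m) :
    |(1 : Matrix m m ℝ) i j| ≤ 1 := by
  rw [one_apply]; split_ifs <;> simp

def BoundedZPowers {m : Type*} [Fintype m] [DecidableEq m] (N : Matrix m m ℝ) : Prop :=
  ∃ C, ∀ k : ℤ, ∀ i j, |(N ^ k) i j| ≤ C

def IsStronglyStable (A : Matrix (Fin 2) (Fin 2) ℝ) : Prop :=
  ∃ ε > 0, ∀ N : Matrix (Fin 2) (Fin 2) ℝ, N.det = 1 → (∀ i j, |A i j - N i j| < ε) →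
    BoundedZPowers N

theorem boundedZPowers_of_abs_trace_lt {N : Matrix (Fin 2) (Fin 2) ℝ} (hN : N.det = 1)
    (ht : |N.trace| < 2) : BoundedZPowers N := by
  have ht' : N.trace ^ 2 < 4 := by nlinarith [sq_abs N.trace, abs_nonneg N.trace]
  set M := √(4 / (4 - N.trace ^ 2))
  obtain ⟨B, hB⟩ := (Set.finite_range fun p : Fin 2 × Fin 2 => |N p.1 p.2|).bddAbove
  refine ⟨M * (B + 1), fun k i j => ?_⟩
  have hNij : |N i j| ≤ B := hB (Set.mem_range_self (i, j))
  have hS₁ := abs_S_eval_le ht' (k - 1)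
  have hS₂ := abs_S_eval_le ht' (k - 2)
  rw [zpow_eq_S_eval_smul_sub (by rw [mul_self_fin_two, hN, one_smul])]
  calc |(((S ℝ (k - 1)).eval N.trace • N - (S ℝ (k - 2)).eval N.trace • 1) i j)|
      ≤ |(S ℝ (k - 1)).eval N.trace| * |N i j| +
          |(S ℝ (k - 2)).eval N.trace| * |(1 : Matrix (Fin 2) (Fin 2) ℝ) i j| := by
        rw [Matrix.sub_apply, Matrix.smul_apply, Matrix.smul_apply, smul_eq_mul, smul_eq_mul,
          ← abs_mul, ← abs_mul]
        exact abs_sub _ _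
    _ ≤ M * B + M * 1 := by
        have := abs_one_apply_le_one (m := Fin 2) i j
        gcongr
    _ = M * (B + 1) := by ring

theorem not_boundedZPowers_of_two_lt_abs_trace {N : Matrix (Fin 2) (Fin 2) ℝ} (hN : N.det = 1)
    (ht : 2 < |N.trace|) : ¬ BoundedZPowers N := by
  rintro ⟨C, hC⟩
  obtain ⟨k, hk⟩ := exists_nat_gt (2 * C / (|N.trace| - 2))
  have hgrowth := two_add_mul_le_abs_C_eval ht.le k
  rw [← trace_zpow_eq_C_eval hN, trace_fin_two (N ^ (k : ℤ))] at hgrowth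
  have hbound : |(N ^ (k : ℤ)) 0 0 + (N ^ (k : ℤ)) 1 1| ≤ 2 * C :=
    (abs_add_le _ _).trans (by linarith [hC k 0 0, hC k 1 1])
  rw [div_lt_iff₀ (by linarith)] at hk
  linarith

theorem Matrix.eventually_abs_sub_apply_lt {m n : Type*} [Finite m] [Finite n]
    (A : Matrix m n ℝ) {ε : ℝ} (hε : 0 < ε) : ∀ᶠ N in 𝓝 A, ∀ i j, |A i j - N i j| < ε := by
  refine eventually_all.2 fun i => eventually_all.2 fun j => ?_
  have hcont : Tendsto (fun N : Matrix m n ℝ => N i j) (𝓝 A) (𝓝 (A i j)) :=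
    ((continuous_apply j).comp (continuous_apply i)).tendsto A
  filter_upwards [Metric.tendsto_nhds.1 hcont ε hε] with N hN
  rwa [Real.dist_eq, abs_sub_comm] at hN

theorem frequently_det_eq_one_and_two_lt_abs_trace {A : Matrix (Fin 2) (Fin 2) ℝ}
    (hA : A.det = 1) (ht : 2 ≤ |A.trace|) :
    ∃ᶠ N in 𝓝 A, N.det = 1 ∧ 2 < |N.trace| := by
  set D : ℝ → Matrix (Fin 2) (Fin 2) ℝ := fun s => A * diagonal ![s, s⁻¹]
  have hD : Tendsto D (𝓝 1) (𝓝 A) := by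
    have : Tendsto (fun s : ℝ => diagonal ![s, s⁻¹]) (𝓝 1) (𝓝 1) := by
      have hv : Tendsto (fun s : ℝ => ![s, s⁻¹]) (𝓝 1) (𝓝 1) := by
        refine tendsto_pi_nhds.2 fun i => ?_
        fin_cases i
        · exact tendsto_id
        · simpa using tendsto_inv₀ (one_ne_zero (α := ℝ))
      have hdiag : Tendsto (fun v : Fin 2 → ℝ => diagonal v) (𝓝 1) (𝓝 1) := by
        simpa [Pi.one_def] using continuous_id.matrix_diagonal.tendsto (1 : Fin 2 → ℝ)
      exact hdiag.comp hv
    simpa [D] using tendsto_const_nhds.mul this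
  have hD' : Tendsto (fun s => D s⁻¹) (𝓝[>] 1) (𝓝 A) := by
    refine hD.comp ((tendsto_inv₀ one_ne_zero).mono_left nhdsWithin_le_nhds |>.trans ?_)
    simp
  have hdet (s : ℝ) (hs : s ≠ 0) : (D s).det = 1 := by simp [D, hA, hs]
  have htrace (s : ℝ) : (D s).trace + (D s⁻¹).trace = A.trace * (s + s⁻¹) := by
    simp only [D, trace_fin_two, mul_diagonal, cons_val_zero, cons_val_one, cons_val_fin_one,
      inv_inv]
    ring
  intro hnot
  obtain ⟨s, hs, hs', hs1⟩ := ((hD.mono_left nhdsWithin_le_nhds |>.eventually hnot).and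
    ((hD'.eventually hnot).and self_mem_nhdsWithin)).exists
  have hs0 : s ≠ 0 := by positivity
  have hsum : 2 < s + s⁻¹ := by
    have : s * s⁻¹ = 1 := mul_inv_cancel₀ hs0
    nlinarith [inv_pos.2 (zero_lt_one.trans hs1)]
  have : 4 < |(D s).trace| + |(D s⁻¹).trace| := by
    calc (4 : ℝ) < |A.trace| * (s + s⁻¹) := by nlinarith
      _ = |(D s).trace + (D s⁻¹).trace| := by
        rw [htrace, abs_mul, abs_of_pos (show 0 < s + s⁻¹ by linarith)]
      _ ≤ _ := abs_add_le _ _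
  rcases le_or_gt |(D s).trace| 2 with h | h
  · exact hs' ⟨hdet _ (inv_ne_zero hs0), by linarith⟩
  · exact hs ⟨hdet _ hs0, h⟩

theorem IsStronglyStable.eventually_boundedZPowers {A : Matrix (Fin 2) (Fin 2) ℝ}
    (h : IsStronglyStable A) : ∀ᶠ N in 𝓝 A, N.det = 1 → BoundedZPowers N := by
  obtain ⟨ε, hε, hA⟩ := h
  filter_upwards [A.eventually_abs_sub_apply_lt hε] with N hN hdet using hA N hdet hN

theorem isStronglyStable_of_abs_trace_lt {A : Matrix (Fin 2) (Fin 2) ℝ} (ht : |A.trace| < 2) :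
    IsStronglyStable A := by
  refine ⟨(2 - |A.trace|) / 2, by linarith, fun N hN hclose =>
    boundedZPowers_of_abs_trace_lt hN ?_⟩
  have : |A.trace - N.trace| < 2 - |A.trace| := by
    rw [show A.trace - N.trace = (A 0 0 - N 0 0) + (A 1 1 - N 1 1) by
      rw [trace_fin_two, trace_fin_two]; ring]
    linarith [abs_add_le (A 0 0 - N 0 0) (A 1 1 - N 1 1), hclose 0 0, hclose 1 1]
  linarith [abs_sub_abs_le_abs_sub N.trace A.trace, abs_sub_comm A.trace N.trace]

theorem isStronglyStable_iff_abs_trace_lt {A : Matrix (Fin 2) (Fin 2) ℝ} (hA : A.det = 1) :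
    IsStronglyStable A ↔ |A.trace| < 2 := by
  refine ⟨fun h => ?_, isStronglyStable_of_abs_trace_lt⟩
  by_contra! ht
  obtain ⟨N, hbdd, hdet, htN⟩ := (h.eventually_boundedZPowers.and_frequently
    (frequently_det_eq_one_and_two_lt_abs_trace hA ht)).exists
  exact not_boundedZPowers_of_two_lt_abs_trace hdet htN (hbdd hdet)

theorem Matrix.mem_spectrum_map_ofReal_fin_two (A : Matrix (Fin 2) (Fin 2) ℝ) (μ : ℂ) :
    μ ∈ spectrum ℂ (A.map (fun x => (x : ℂ))) ↔ μ ^ 2 - A.trace * μ + A.det = 0 := by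
  rw [mem_spectrum_iff_isRoot_charpoly, charpoly_fin_two, IsRoot.def]
  simp [trace_fin_two, det_fin_two]

theorem Complex.norm_eq_one_of_sq_sub_mul_add_one_eq_zero {t : ℝ} (ht : |t| < 2) {μ : ℂ}
    (hμ : μ ^ 2 - t * μ + 1 = 0) : ‖μ‖ = 1 ∧ μ.im ≠ 0 := by
  have hre := congrArg re hμ
  have him := congrArg im hμ
  simp only [sq, add_re, sub_re, mul_re, ofReal_re, ofReal_im, zero_mul, sub_zero, one_re,
    zero_re, add_im, sub_im, mul_im, add_zero, one_im, zero_im] at hre him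
  have ht' : t ^ 2 < 4 := by nlinarith [sq_abs t, abs_nonneg t]
  have hy : μ.im ≠ 0 := by
    intro hy
    rw [hy] at hre
    nlinarith [sq_nonneg (2 * μ.re - t)]
  have hx : 2 * μ.re - t = 0 :=
    (mul_eq_zero.1 (by linear_combination him : μ.im * (2 * μ.re - t) = 0)).resolve_left hy
  refine ⟨?_, hy⟩
  rw [Complex.norm_def, Real.sqrt_eq_one, Complex.normSq_apply]
  linear_combination -hre + μ.re * hx

theorem Complex.forall_roots_norm_eq_one_ne_one_ne_neg_one_iff {t : ℝ} :
    (∀ μ : ℂ, μ ^ 2 - t * μ + 1 = 0 → ‖μ‖ = 1 ∧ μ ≠ 1 ∧ μ ≠ -1) ↔ |t| < 2 := by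
  refine ⟨fun h => ?_, fun ht μ hμ => ?_⟩
  · by_contra! ht
    set r := (t + √(t ^ 2 - 4)) / 2
    have hr : r ^ 2 - t * r + 1 = 0 := by
      have : √(t ^ 2 - 4) ^ 2 = t ^ 2 - 4 := Real.sq_sqrt (by nlinarith [sq_abs t])
      linear_combination this / 4
    obtain ⟨hnorm, hne₁, hne₂⟩ := h r (by exact_mod_cast hr)
    rw [Complex.norm_real, Real.norm_eq_abs] at hnorm
    rcases abs_eq zero_le_one |>.1 hnorm with h1 | h1
    · exact hne₁ (by simp [h1])
    · exact hne₂ (by simp [h1])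
  · obtain ⟨hnorm, him⟩ := Complex.norm_eq_one_of_sq_sub_mul_add_one_eq_zero ht hμ
    exact ⟨hnorm, fun h => him (by simp [h]), fun h => him (by simp [h])⟩

/-- A 2×2 real symplectic matrix `A` (`det A = 1`) is strongly stable
(all symplectic matrices in a neighborhood of `A` have bounded powers `{N^k}_{k∈ℤ}`)
iff its eigenvalues lie in `S¹ \ {±1}`, which is equivalent to `|tr A| < 2`. -/
theorem strong_stability_iff_elliptic
    (A : Matrix (Fin 2) (Fin 2) ℝ) (hA : A.det = 1) :
    ((∃ ε > 0, ∀ N : Matrix (Fin 2) (Fin 2) ℝ, N.det = 1 →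
        (∀ i j, |A i j - N i j| < ε) →
        ∃ C, ∀ k : ℤ, ∀ i j, |(N ^ k) i j| ≤ C) ↔
      (∀ μ ∈ spectrum ℂ (A.map (fun x => (x : ℂ))),
        ‖μ‖ = 1 ∧ μ ≠ 1 ∧ μ ≠ -1)) ∧
    ((∀ μ ∈ spectrum ℂ (A.map (fun x => (x : ℂ))),
        ‖μ‖ = 1 ∧ μ ≠ 1 ∧ μ ≠ -1) ↔ |A.trace| < 2) := by
  have hspec : (∀ μ ∈ spectrum ℂ (A.map (fun x => (x : ℂ))), ‖μ‖ = 1 ∧ μ ≠ 1 ∧ μ ≠ -1) ↔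
      |A.trace| < 2 := by
    simp only [mem_spectrum_map_ofReal_fin_two, hA, Complex.ofReal_one]
    exact Complex.forall_roots_norm_eq_one_ne_one_ne_neg_one_iff
  exact ⟨(isStronglyStable_iff_abs_trace_lt hA).trans hspec.symm, hspec⟩
end

section
/- Let θ(t;ω) be the clockwise angular coordinate of the solution of Jz' = S(t)z starting at e^{−iω}, with θ(0;ω) = ω, and let r(t;ω) be the radial coordinate. Then ∂θ/∂ω (t;ω) = 1/r(t;ω)² for all t. -/
/-!
Along the flow of `J z' = S(t) z` the wedge product of two solutions is constant, which in polar
coordinates reads `r(t;w₁) r(t;w₂) sin (θ(t;w₁) - θ(t;w₂)) = sin (w₁ - w₂)`. Using it against the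
solutions starting at `ω` and `ω + π/2` gives, for a constant `κ`,
`r(t;ω) r(t;w) e^{i(θ(t;w) - θ(t;ω))} = r(t;ω)² cos (w - ω) + κ sin (w - ω) + i sin (w - ω)`.
By Grönwall `θ(t;·)` is continuous, so near `ω` the angle difference is the arctangent of the
ratio of these coordinates, whose derivative at `w = ω` is `1 / r(t;ω)²`.
-/

open Real Set Filter Topology
open scoped NNReal

theorem hasDerivAt_angle_of_polar {f g ρ φ : ℝ → ℝ} {f' g' x₀ : ℝ}
    (hf : HasDerivAt f f' x₀) (hg : HasDerivAt g g' x₀)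
    (hφ : ContinuousAt φ x₀) (hφx₀ : φ x₀ ∈ Ioo (-(π / 2)) (π / 2)) (hρ : ∀ x, ρ x ≠ 0)
    (hcos : ∀ x, ρ x * cos (φ x) = f x) (hsin : ∀ x, ρ x * sin (φ x) = g x) :
    HasDerivAt φ ((f x₀ * g' - g x₀ * f') / (f x₀ ^ 2 + g x₀ ^ 2)) x₀ := by
  have hf₀ : f x₀ ≠ 0 := hcos x₀ ▸ mul_ne_zero (hρ x₀) (cos_pos_of_mem_Ioo hφx₀).ne'
  have harctan : (fun x => arctan (g x / f x)) =ᶠ[𝓝 x₀] φ := by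
    filter_upwards [hφ.preimage_mem_nhds (isOpen_Ioo.mem_nhds hφx₀)] with x hx
    rw [← hcos, ← hsin, mul_div_mul_left _ _ (hρ x), ← tan_eq_sin_div_cos, arctan_tan hx.1 hx.2]
  refine (((hg.div hf hf₀).arctan).congr_of_eventuallyEq harctan.symm).congr_deriv ?_
  rw [Pi.div_apply]
  field_simp

theorem dist_le_mul_exp_abs_of_hasDerivAt {E : Type*} [NormedAddCommGroup E] [NormedSpace ℝ E]
    {v : ℝ → E → E} {K : ℝ≥0} {f g : ℝ → E} {t₀ t : ℝ}
    (hv : ∀ s ∈ uIcc t₀ t, LipschitzWith K (v s))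
    (hf : ∀ s, HasDerivAt f (v s (f s)) s) (hg : ∀ s, HasDerivAt g (v s (g s)) s) :
    dist (f t) (g t) ≤ dist (f t₀) (g t₀) * exp (K * |t - t₀|) := by
  wlog h : t₀ ≤ t generalizing v f g t₀ t
  · have hrev := this (v := fun s x => -v (-s) x) (f := f ∘ Neg.neg) (g := g ∘ Neg.neg)
      (t₀ := -t₀) (t := -t) ?_ ?_ ?_ (by linarith)
    · simpa [abs_sub_comm, neg_add_eq_sub] using hrev
    · intro s hs
      refine LipschitzWith.of_dist_le_mul fun x y => ?_
      rw [dist_neg_neg]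
      have hs' := mem_image_of_mem Neg.neg hs
      rw [image_neg_uIcc, neg_neg, neg_neg] at hs'
      exact (hv (-s) hs').dist_le_mul x y
    · exact fun s => by simpa using (hf (-s)).scomp s (hasDerivAt_neg s)
    · exact fun s => by simpa using (hg (-s)).scomp s (hasDerivAt_neg s)
  · have hsol : ∀ {u : ℝ → E}, (∀ s, HasDerivAt u (v s (u s)) s) →
        ContinuousOn u (Icc t₀ t) ∧ ∀ s ∈ Ico t₀ t, HasDerivWithinAt u (v s (u s)) (Ici s) s :=
      fun hu => ⟨HasDerivAt.continuousOn fun s _ => hu s, fun s _ => (hu s).hasDerivWithinAt⟩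
    rw [abs_of_nonneg (sub_nonneg.2 h)]
    exact dist_le_of_trajectories_ODE_of_mem (s := fun _ => univ)
      (fun s hs => (hv s (Icc_subset_uIcc (Ico_subset_Icc_self hs))).lipschitzOnWith)
      (hsol hf).1 (hsol hf).2 (fun _ _ => trivial) (hsol hg).1 (hsol hg).2 (fun _ _ => trivial)
      le_rfl t ⟨h, le_rfl⟩

noncomputable def angularField (A B C x : ℝ) : ℝ :=
  A * cos x ^ 2 + C * sin x ^ 2 - 2 * B * cos x * sin x

theorem hasDerivAt_angularField (A B C x : ℝ) :
    HasDerivAt (angularField A B C)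
      (2 * (C - A) * sin x * cos x - 2 * B * (cos x ^ 2 - sin x ^ 2)) x := by
  have h := ((((hasDerivAt_cos x).pow 2).const_mul A).add
    (((hasDerivAt_sin x).pow 2).const_mul C)).sub
    (((hasDerivAt_cos x).mul (hasDerivAt_sin x)).const_mul (2 * B))
  refine (h.congr_deriv ?_).congr_of_eventuallyEq (Eventually.of_forall fun y => ?_)
  · push_cast
    ring
  · simp only [angularField, Pi.add_apply, Pi.sub_apply, Pi.mul_apply, Pi.pow_apply]
    ring

theorem lipschitzWith_angularField {M A B C : ℝ} (hA : |A| ≤ M) (hB : |B| ≤ M) (hC : |C| ≤ M) :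
    LipschitzWith (4 * M).toNNReal (angularField A B C) := by
  refine lipschitzWith_of_nnnorm_deriv_le
    (fun x => (hasDerivAt_angularField A B C x).differentiableAt) fun x => ?_
  rw [(hasDerivAt_angularField A B C x).deriv, ← NNReal.coe_le_coe, coe_nnnorm,
    coe_toNNReal _ (by linarith [abs_nonneg A]), Real.norm_eq_abs, abs_le]
  obtain ⟨hA₁, hA₂⟩ := abs_le.1 hA
  obtain ⟨hB₁, hB₂⟩ := abs_le.1 hB
  obtain ⟨hC₁, hC₂⟩ := abs_le.1 hC
  have := sin_sq_add_cos_sq x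
  constructor <;> nlinarith [sq_nonneg (sin x - cos x), sq_nonneg (sin x + cos x),
    sq_nonneg (sin x), sq_nonneg (cos x)]

theorem exists_lipschitzWith_angularField_flow {a b c : ℝ → ℝ}
    (ha : Continuous a) (hb : Continuous b) (hc : Continuous c) {θ : ℝ → ℝ → ℝ}
    (hθ0 : ∀ ω, θ 0 ω = ω)
    (hθ : ∀ ω t, HasDerivAt (fun s => θ s ω) (angularField (a t) (b t) (c t) (θ t ω)) t) (t : ℝ) :
    ∃ K, LipschitzWith K (θ t) := by
  obtain ⟨M, hM⟩ := (isCompact_uIcc : IsCompact (uIcc 0 t)).exists_bound_of_continuousOn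
    (f := fun s => |a s| + |b s| + |c s|) (by fun_prop)
  have hlip : ∀ s ∈ uIcc 0 t,
      LipschitzWith (4 * M).toNNReal (angularField (a s) (b s) (c s)) := by
    intro s hs
    have hbound := (le_abs_self _).trans (hM s hs)
    have := abs_nonneg (a s)
    have := abs_nonneg (b s)
    have := abs_nonneg (c s)
    exact lipschitzWith_angularField (by linarith) (by linarith) (by linarith)
  refine ⟨(exp ((4 * M).toNNReal * |t - 0|)).toNNReal,
    LipschitzWith.of_dist_le_mul fun w w' => ?_⟩
  have := dist_le_mul_exp_abs_of_hasDerivAt hlip (hθ w) (hθ w')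
  rw [hθ0, hθ0] at this
  rw [coe_toNNReal _ (exp_pos _).le, mul_comm]
  exact this

/-- The curve `w ↦ R w • (cos (Φ w), sin (Φ w))` has the same pairwise wedge products as the
unit vectors `(cos w, sin w)`. -/
def PreservesWedge (R Φ : ℝ → ℝ) : Prop :=
  ∀ w₁ w₂, R w₁ * R w₂ * sin (Φ w₁ - Φ w₂) = sin (w₁ - w₂)

namespace PreservesWedge

variable {R Φ : ℝ → ℝ}

theorem ne_zero (h : PreservesWedge R Φ) (w : ℝ) : R w ≠ 0 := by
  have hw := h w (w + π / 2)
  rw [show w - (w + π / 2) = -(π / 2) by ring, sin_neg, sin_pi_div_two] at hw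
  exact left_ne_zero_of_mul (left_ne_zero_of_mul (hw ▸ neg_ne_zero.2 one_ne_zero))

theorem mul_mul_cos_sub (h : PreservesWedge R Φ) (w₁ w₂ : ℝ) :
    R w₂ * R w₁ * cos (Φ w₁ - Φ w₂) = R w₂ ^ 2 * cos (w₁ - w₂)
      + R w₂ * R (w₂ + π / 2) * cos (Φ (w₂ + π / 2) - Φ w₂) * sin (w₁ - w₂) := by
  have h₁ := h w₁ w₂
  have h₂ := h (w₂ + π / 2) w₂
  have h₃ := h w₁ (w₂ + π / 2)
  rw [add_sub_cancel_left, sin_pi_div_two] at h₂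
  rw [show w₁ - (w₂ + π / 2) = w₁ - w₂ - π / 2 by ring, sin_sub_pi_div_two,
    show Φ w₁ - Φ (w₂ + π / 2) = (Φ w₁ - Φ w₂) - (Φ (w₂ + π / 2) - Φ w₂) by ring, sin_sub] at h₃
  linear_combination -R w₂ * (R w₂ * h₃ - R (w₂ + π / 2) * cos (Φ (w₂ + π / 2) - Φ w₂) * h₁
    + R w₁ * cos (Φ w₁ - Φ w₂) * h₂)

theorem hasDerivAt (h : PreservesWedge R Φ) {ω : ℝ} (hΦ : ContinuousAt Φ ω) :
    HasDerivAt Φ (1 / R ω ^ 2) ω := by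
  set κ := R ω * R (ω + π / 2) * cos (Φ (ω + π / 2) - Φ ω)
  have hf : HasDerivAt (fun w => R ω ^ 2 * cos (w - ω) + κ * sin (w - ω))
      (R ω ^ 2 * -sin (ω - ω) + κ * cos (ω - ω)) ω := by
    have := (hasDerivAt_id ω).sub_const ω
    simpa using (this.cos.const_mul _).fun_add (this.sin.const_mul κ)
  have hg : HasDerivAt (fun w => sin (w - ω)) 1 ω := by
    simpa using ((hasDerivAt_id ω).sub_const ω).sin
  have hangle := hasDerivAt_angle_of_polar (ρ := fun w => R ω * R w) (φ := fun w => Φ w - Φ ω)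
    hf hg (hΦ.sub continuousAt_const) (by simp [Real.pi_pos])
    (fun w => mul_ne_zero (h.ne_zero ω) (h.ne_zero w)) (fun w => h.mul_mul_cos_sub w ω)
    (fun w => by rw [mul_comm (R ω)]; exact h w ω)
  rw [hasDerivAt_sub_const_iff] at hangle
  refine hangle.congr_deriv ?_
  simp only [sub_self, cos_zero, sin_zero]
  field_simp [h.ne_zero ω]
  ring

end PreservesWedge

theorem preservesWedge_of_hasDerivAt_polar {a b c : ℝ → ℝ} {θ r : ℝ → ℝ → ℝ}
    (hθ0 : ∀ ω, θ 0 ω = ω) (hr0 : ∀ ω, r 0 ω = 1)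
    (hθ : ∀ ω t, HasDerivAt (fun s => θ s ω) (angularField (a t) (b t) (c t) (θ t ω)) t)
    (hr : ∀ ω t, HasDerivAt (fun s => r s ω)
      (- r t ω * (sin (θ t ω) * cos (θ t ω) * (c t - a t)
        - (cos (θ t ω) ^ 2 - sin (θ t ω) ^ 2) * b t)) t)
    (t : ℝ) : PreservesWedge (r t) (θ t) := by
  intro w₁ w₂
  have hderiv : ∀ s, HasDerivAt (fun u => r u w₁ * r u w₂ * sin (θ u w₁ - θ u w₂)) 0 s := by
    intro s
    refine (((hr w₁ s).mul (hr w₂ s)).mul ((hθ w₁ s).sub (hθ w₂ s)).sin).congr_deriv ?_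
    simp only [angularField, Pi.mul_apply, Pi.sub_apply, sin_sub, cos_sub]
    linear_combination (r s w₁ * r s w₂ * (a s * cos (θ s w₁) * cos (θ s w₂)
        - b s * cos (θ s w₁) * sin (θ s w₂) - b s * sin (θ s w₁) * cos (θ s w₂)
        + c s * sin (θ s w₁) * sin (θ s w₂)))
      * (sin_sq_add_cos_sq (θ s w₁) - sin_sq_add_cos_sq (θ s w₂))
  have := is_const_of_deriv_eq_zero (fun s => (hderiv s).differentiableAt)
    (fun s => (hderiv s).deriv) t 0
  simpa [hθ0, hr0] using this

/-- For the clockwise polar coordinates `(r, θ)` of the solution of the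
planar Hamiltonian system `J z' = S(t) z` starting at `e^{−iω}` (so `θ(0;ω) = ω`,
`r(0;ω) = 1`, and `θ`, `r` solve the polar ODEs associated with
`S(t) = (a b; b c)`), one has `∂θ/∂ω (t;ω) = 1/r(t;ω)²` for all `t`. -/
theorem deriv_theta_omega_eq_inv_r_sq
    (a b c : ℝ → ℝ)
    (ha : Continuous a) (hb : Continuous b) (hc : Continuous c)
    (θ r : ℝ → ℝ → ℝ)
    (hθ0 : ∀ ω, θ 0 ω = ω) (hr0 : ∀ ω, r 0 ω = 1)
    (hθ : ∀ ω t, HasDerivAt (fun s => θ s ω)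
      (a t * cos (θ t ω) ^ 2 + c t * sin (θ t ω) ^ 2
        - 2 * b t * cos (θ t ω) * sin (θ t ω)) t)
    (hr : ∀ ω t, HasDerivAt (fun s => r s ω)
      (- r t ω * (sin (θ t ω) * cos (θ t ω) * (c t - a t)
        - (cos (θ t ω) ^ 2 - sin (θ t ω) ^ 2) * b t)) t) :
    ∀ t ω, HasDerivAt (fun w => θ t w) (1 / (r t ω) ^ 2) ω := by
  intro t ω
  obtain ⟨K, hK⟩ := exists_lipschitzWith_angularField_flow ha hb hc hθ0 hθ t
  exact (preservesWedge_of_hasDerivAt_polar hθ0 hr0 hθ hr t).hasDerivAt hK.continuous.continuousAt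
end

section
/- Define the winding number η_T(ω) = (θ(T;ω) − ω)/(2π) for the solution of Jz' = S(t)z starting at e^{−iω}. Then η_T(ω) ∈ ℤ if and only if e^{−iω} is an eigenvector of the monodromy matrix M(T) with positive eigenvalue, and η_T(ω) ∈ ℤ + 1/2 if and only if e^{−iω} is an eigenvector of M(T) with negative eigenvalue. -/
/-!
The amplitude `r` solves the scalar linear equation `r' = r f`, so `r(t) = exp ∫₀ᵗ f > 0`.
Hence `M(T) e^{-iω} = r(T) e^{-iθ(T)}` is a positive multiple of `e^{-iω}` exactly when
`θ(T) ≡ ω (mod 2π)`, and a negative one exactly when `θ(T) ≡ ω + π (mod 2π)`.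
-/

open Matrix Real

/-- The standard 2×2 symplectic matrix `J`. -/
def Jmat : Matrix (Fin 2) (Fin 2) ℝ := !![0, -1; 1, 0]

namespace Real.Angle

theorem coe_eq_coe_iff_cos_eq_and_sin_eq {x y : ℝ} :
    (x : Angle) = y ↔ Real.cos x = Real.cos y ∧ Real.sin x = Real.sin y :=
  ⟨fun h => ⟨by rw [← cos_coe, h, cos_coe], by rw [← sin_coe, h, sin_coe]⟩,
    fun h => cos_sin_inj h.1 h.2⟩

theorem coe_eq_coe_iff_exists_int {x y : ℝ} :
    (x : Angle) = y ↔ ∃ n : ℤ, (x - y) / (2 * π) = n := by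
  simp only [angle_eq_iff_two_pi_dvd_sub, div_eq_iff two_pi_pos.ne']
  exact exists_congr fun n => by rw [mul_comm]

theorem coe_eq_coe_add_pi_iff_exists_int {x y : ℝ} :
    (x : Angle) = ↑(y + π) ↔ ∃ n : ℤ, (x - y) / (2 * π) = n + 1 / 2 := by
  have h : (x - y) / (2 * π) = (x - (y + π)) / (2 * π) + 1 / 2 := by
    field_simp
    ring
  simp only [coe_eq_coe_iff_exists_int, h, add_left_inj]

end Real.Angle

theorem vec_eq_smul_vec_iff {r μ θ ω : ℝ} :
    ![r * cos θ, -(r * sin θ)] = μ • ![cos ω, -sin ω] ↔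
      r * cos θ = μ * cos ω ∧ r * sin θ = μ * sin ω := by
  simp [funext_iff, Fin.forall_fin_two]

theorem exists_pos_smul_vec_eq_iff {r θ ω : ℝ} (hr : 0 < r) :
    (∃ μ : ℝ, 0 < μ ∧ ![r * cos θ, -(r * sin θ)] = μ • ![cos ω, -sin ω]) ↔
      (θ : Angle) = ω := by
  simp only [vec_eq_smul_vec_iff, Angle.coe_eq_coe_iff_cos_eq_and_sin_eq]
  constructor
  · rintro ⟨μ, hμ, hcos, hsin⟩
    have hrμ : r = μ := by
      -- compare the lengths of both sides
      have : r ^ 2 = μ ^ 2 := by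
        linear_combination (r * cos θ + μ * cos ω) * hcos + (r * sin θ + μ * sin ω) * hsin
          - r ^ 2 * sin_sq_add_cos_sq θ + μ ^ 2 * sin_sq_add_cos_sq ω
      exact (pow_left_inj₀ hr.le hμ.le two_ne_zero).1 this
    subst hrμ
    exact ⟨mul_left_cancel₀ hr.ne' hcos, mul_left_cancel₀ hr.ne' hsin⟩
  · rintro ⟨hcos, hsin⟩
    exact ⟨r, hr, by rw [hcos], by rw [hsin]⟩

theorem exists_neg_smul_vec_eq_iff {r θ ω : ℝ} (hr : 0 < r) :
    (∃ μ : ℝ, μ < 0 ∧ ![r * cos θ, -(r * sin θ)] = μ • ![cos ω, -sin ω]) ↔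
      (θ : Angle) = ↑(ω + π) := by
  have hv : ![cos (ω + π), -sin (ω + π)] = -![cos ω, -sin ω] := by
    simp [cos_add_pi, sin_add_pi]
  rw [← exists_pos_smul_vec_eq_iff hr, hv]
  constructor
  · rintro ⟨μ, hμ, h⟩
    exact ⟨-μ, neg_pos.2 hμ, by rw [h, neg_smul_neg]⟩
  · rintro ⟨μ, hμ, h⟩
    exact ⟨-μ, neg_neg_of_pos hμ, by rw [h, smul_neg, neg_smul]⟩

theorem eq_mul_exp_integral_of_hasDerivAt {f r : ℝ → ℝ} (hf : Continuous f)
    (hr : ∀ t, HasDerivAt r (r t * f t) t) (a t : ℝ) :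
    r t = r a * exp (∫ s in a..t, f s) := by
  set F : ℝ → ℝ := fun t => ∫ s in a..t, f s
  have hg : ∀ t, HasDerivAt (fun t => r t * exp (-F t)) 0 t := fun t =>
    ((hr t).mul (hf.integral_hasStrictDerivAt a t).hasDerivAt.neg.exp).congr_deriv (by ring)
  have hconst := is_const_of_deriv_eq_zero (fun t => (hg t).differentiableAt)
    (fun t => (hg t).deriv) t a
  simp only [F, intervalIntegral.integral_same, neg_zero, exp_zero, mul_one] at hconst
  rw [← hconst, mul_assoc, ← exp_add, neg_add_cancel, exp_zero, mul_one]

theorem winding_integer_iff_eigenvector_general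
    (T : ℝ)
    (a b c : ℝ → ℝ)
    (ha : Continuous a) (hb : Continuous b) (hc : Continuous c)
    (θ r : ℝ → ℝ → ℝ)
    (hr0 : ∀ ω, r 0 ω = 1)
    (hθ : ∀ ω t, HasDerivAt (fun s => θ s ω)
      (a t * cos (θ t ω) ^ 2 + c t * sin (θ t ω) ^ 2
        - 2 * b t * cos (θ t ω) * sin (θ t ω)) t)
    (hr : ∀ ω t, HasDerivAt (fun s => r s ω)
      (- r t ω * (sin (θ t ω) * cos (θ t ω) * (c t - a t)
        - (cos (θ t ω) ^ 2 - sin (θ t ω) ^ 2) * b t)) t)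
    (M : ℝ → Matrix (Fin 2) (Fin 2) ℝ)
    (hM : ∀ t ω, (M t).mulVec ![cos ω, -sin ω] =
      ![r t ω * cos (θ t ω), -(r t ω * sin (θ t ω))]) :
    ∀ ω : ℝ,
      ((∃ n : ℤ, (θ T ω - ω) / (2 * π) = n) ↔
        ∃ μ : ℝ, 0 < μ ∧ (M T).mulVec ![cos ω, -sin ω] = μ • ![cos ω, -sin ω]) ∧
      ((∃ n : ℤ, (θ T ω - ω) / (2 * π) = n + 1 / 2) ↔
        ∃ μ : ℝ, μ < 0 ∧ (M T).mulVec ![cos ω, -sin ω] = μ • ![cos ω, -sin ω]) := by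
  intro ω
  have hθω : Continuous (θ · ω) :=
    continuous_iff_continuousAt.2 fun t => (hθ ω t).continuousAt
  have hrT : 0 < r T ω := by
    rw [eq_mul_exp_integral_of_hasDerivAt (by fun_prop)
      (fun t => (hr ω t).congr_deriv (neg_mul_comm _ _)) 0 T, hr0]
    positivity
  rw [hM, exists_pos_smul_vec_eq_iff hrT, exists_neg_smul_vec_eq_iff hrT]
  exact ⟨Angle.coe_eq_coe_iff_exists_int.symm, Angle.coe_eq_coe_add_pi_iff_exists_int.symm⟩

/-- With `η_T(ω) = (θ(T;ω) − ω)/(2π)` the winding number of the solution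
of `J z' = S(t) z` starting at `e^{−iω}`, `η_T(ω) ∈ ℤ` iff `e^{−iω}` is an eigenvector of
the monodromy matrix `M(T)` with positive eigenvalue, and `η_T(ω) ∈ ℤ + 1/2` iff it is an
eigenvector of `M(T)` with negative eigenvalue. -/
theorem winding_integer_iff_eigenvector
    (T : ℝ) (hT : 0 < T)
    (a b c : ℝ → ℝ)
    (ha : Continuous a) (hb : Continuous b) (hc : Continuous c)
    (haper : ∀ t, a (t + T) = a t) (hbper : ∀ t, b (t + T) = b t)
    (hcper : ∀ t, c (t + T) = c t)
    (θ r : ℝ → ℝ → ℝ)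
    (hθ0 : ∀ ω, θ 0 ω = ω) (hr0 : ∀ ω, r 0 ω = 1)
    (hθ : ∀ ω t, HasDerivAt (fun s => θ s ω)
      (a t * cos (θ t ω) ^ 2 + c t * sin (θ t ω) ^ 2
        - 2 * b t * cos (θ t ω) * sin (θ t ω)) t)
    (hr : ∀ ω t, HasDerivAt (fun s => r s ω)
      (- r t ω * (sin (θ t ω) * cos (θ t ω) * (c t - a t)
        - (cos (θ t ω) ^ 2 - sin (θ t ω) ^ 2) * b t)) t)
    (M : ℝ → Matrix (Fin 2) (Fin 2) ℝ)
    (hM : ∀ t ω, (M t).mulVec ![cos ω, -sin ω] =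
      ![r t ω * cos (θ t ω), -(r t ω * sin (θ t ω))]) :
    ∀ ω : ℝ,
      ((∃ n : ℤ, (θ T ω - ω) / (2 * π) = n) ↔
        ∃ μ : ℝ, 0 < μ ∧ (M T).mulVec ![cos ω, -sin ω] = μ • ![cos ω, -sin ω]) ∧
      ((∃ n : ℤ, (θ T ω - ω) / (2 * π) = n + 1 / 2) ↔
        ∃ μ : ℝ, μ < 0 ∧ (M T).mulVec ![cos ω, -sin ω] = μ • ![cos ω, -sin ω]) :=
  winding_integer_iff_eigenvector_general T a b c ha hb hc θ r hr0 hθ hr M hM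
end

section
/- With η_T(ω) = (θ(T;ω) − ω)/(2π) the winding number of the solution of Jz' = S(t)z starting at e^{−iω}, the solution z(t; e^{−iω}) is T-periodic if and only if η_T(ω) ∈ ℤ and η_T'(ω) = 0, and T-antiperiodic if and only if η_T(ω) ∈ ℤ + 1/2 and η_T'(ω) = 0. -/
/-!
Write the solution as `z = r e^{-iθ}`. The angular field is `π`-periodic in `θ` and `T`-periodic
in `t`, so by uniqueness for the angular and the (linear) radial equation, `z` is `T`-periodic
(antiperiodic) exactly when `r(T) = 1` and `θ(T) - ω ∈ 2πℤ` (resp. `π + 2πℤ`). The derivative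
of `θ(T; ·)` solves the variational equation `v' = ∂_θ(angular field) v = 2 G v`, `v(0) = 1`,
where `-G` is the logarithmic derivative of `r`; its solution is `1 / r²`. Hence
`η_T'(ω) = (1 / r(T; ω)² - 1) / (2π)`, which vanishes iff `r(T; ω) = 1`, since `r > 0`.
-/

open Real Set Filter Asymptotics

theorem abs_sub_le_mul_of_hasDerivAt {f f' : ℝ → ℝ} {C : ℝ}
    (hf : ∀ x, HasDerivAt f (f' x) x) (hC : ∀ x, |f' x| ≤ C) (x y : ℝ) :
    |f x - f y| ≤ C * |x - y| :=
  convex_univ.norm_image_sub_le_of_norm_hasDerivWithin_le (fun z _ => (hf z).hasDerivWithinAt)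
    (fun z _ => hC z) (mem_univ y) (mem_univ x)

theorem abs_sub_sub_mul_le_of_hasDerivAt {f f' : ℝ → ℝ} {C : ℝ}
    (hf : ∀ x, HasDerivAt f (f' x) x) (hf' : ∀ x y, |f' x - f' y| ≤ C * |x - y|) (x y : ℝ) :
    |f x - f y - f' y * (x - y)| ≤ C * (x - y) ^ 2 := by
  have hC : 0 ≤ C := by simpa using (abs_nonneg _).trans (hf' 1 0)
  have key := (convex_uIcc y x).norm_image_sub_le_of_norm_hasDerivWithin_le
    (f := fun z => f z - f' y * z) (C := C * |x - y|)
    (fun z _ => ((hf z).sub ((hasDerivAt_id z).const_mul (f' y))).hasDerivWithinAt)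
    (fun z hz => by
      simpa using (hf' z y).trans (mul_le_mul_of_nonneg_left (abs_sub_left_of_mem_uIcc hz) hC))
    left_mem_uIcc right_mem_uIcc
  calc |f x - f y - f' y * (x - y)| = ‖(f x - f' y * x) - (f y - f' y * y)‖ := by
        rw [Real.norm_eq_abs]; ring_nf
    _ ≤ C * |x - y| * ‖x - y‖ := key
    _ = C * (x - y) ^ 2 := by rw [Real.norm_eq_abs, mul_assoc, ← sq, sq_abs]

theorem hasDerivAt_of_abs_sub_sub_le_sq {f : ℝ → ℝ} {d C x : ℝ}
    (h : ∀ w, |f w - f x - (w - x) * d| ≤ C * (w - x) ^ 2) : HasDerivAt f d x := by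
  rw [hasDerivAt_iff_isLittleO]
  refine IsBigO.trans_isLittleO (g := fun w => ‖w - x‖ ^ 2) ?_
    (isLittleO_pow_sub_sub x one_lt_two)
  refine IsBigO.of_bound C (Eventually.of_forall fun w => ?_)
  simpa [smul_eq_mul] using h w

theorem gronwallBound_zero_eq_mul (K ε x : ℝ) :
    gronwallBound 0 K ε x = ε * gronwallBound 0 K 1 x := by
  unfold gronwallBound; split_ifs <;> ring

theorem eq_of_hasDerivAt_mul_self {g f₁ f₂ : ℝ → ℝ} {K t₀ : ℝ} (hg : ∀ t, |g t| ≤ K)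
    (hf₁ : ∀ t, HasDerivAt f₁ (g t * f₁ t) t) (hf₂ : ∀ t, HasDerivAt f₂ (g t * f₂ t) t)
    (h : f₁ t₀ = f₂ t₀) : f₁ = f₂ := by
  have hlip (t : ℝ) : LipschitzWith K.toNNReal (g t * ·) :=
    (lipschitzWith_smul (g t)).weaken <| by
      rw [← NNReal.coe_le_coe, Real.coe_toNNReal _ ((abs_nonneg _).trans (hg t))]
      exact hg t
  exact ODE_solution_unique_univ (v := fun t x => g t * x) (s := fun _ => univ)
    (fun t => (hlip t).lipschitzOnWith) (fun t => ⟨hf₁ t, trivial⟩) (fun t => ⟨hf₂ t, trivial⟩) h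

section Flow

variable {F F' φ : ℝ → ℝ → ℝ} {L : ℝ}

theorem abs_flow_sub_le (hF : ∀ t x, HasDerivAt (F t) (F' t x) x) (hF'_le : ∀ t x, |F' t x| ≤ L)
    (hφ0 : ∀ w, φ 0 w = w) (hφ : ∀ w t, HasDerivAt (φ · w) (F t (φ t w)) t)
    {t : ℝ} (ht : 0 ≤ t) (w ω : ℝ) : |φ t w - φ t ω| ≤ |w - ω| * exp (L * t) := by
  have hL : 0 ≤ L := (abs_nonneg _).trans (hF'_le 0 0)
  have hlip (s : ℝ) : LipschitzWith L.toNNReal (F s) := LipschitzWith.of_dist_le_mul fun x y => by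
    simpa [Real.dist_eq, hL] using abs_sub_le_mul_of_hasDerivAt (hF s) (hF'_le s) x y
  have hφc (w : ℝ) : Continuous (φ · w) :=
    continuous_iff_continuousAt.2 fun s => (hφ w s).continuousAt
  have := dist_le_of_trajectories_ODE (δ := |w - ω|) hlip (hφc w).continuousOn
    (fun s _ => (hφ w s).hasDerivWithinAt) (hφc ω).continuousOn
    (fun s _ => (hφ ω s).hasDerivWithinAt) (by simp [hφ0, Real.dist_eq]) t ⟨ht, le_rfl⟩
  rwa [Real.dist_eq, Real.coe_toNNReal _ hL, sub_zero] at this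

theorem hasDerivAt_flow_of_variational {v : ℝ → ℝ} {T ω : ℝ} (hT : 0 ≤ T)
    (hF : ∀ t x, HasDerivAt (F t) (F' t x) x) (hF'_le : ∀ t x, |F' t x| ≤ L)
    (hF'_lip : ∀ t x y, |F' t x - F' t y| ≤ L * |x - y|)
    (hφ0 : ∀ w, φ 0 w = w) (hφ : ∀ w t, HasDerivAt (φ · w) (F t (φ t w)) t)
    (hv0 : v 0 = 1) (hv : ∀ t, HasDerivAt v (F' t (φ t ω) * v t) t) :
    HasDerivAt (φ T) (v T) ω := by
  have hφc (w : ℝ) : Continuous (φ · w) :=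
    continuous_iff_continuousAt.2 fun t => (hφ w t).continuousAt
  have hvc : Continuous v := continuous_iff_continuousAt.2 fun t => (hv t).continuousAt
  have hL : 0 ≤ L := (abs_nonneg _).trans (hF'_le 0 0)
  set E := exp (L * T)
  refine hasDerivAt_of_abs_sub_sub_le_sq (C := L * E ^ 2 * gronwallBound 0 L 1 T) fun w => ?_
  have hclose (t : ℝ) (ht : t ∈ Ico 0 T) : (φ t w - φ t ω) ^ 2 ≤ (|w - ω| * E) ^ 2 := by
    rw [← sq_abs]
    gcongr
    refine (abs_flow_sub_le hF hF'_le hφ0 hφ ht.1 w ω).trans ?_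
    gcongr
    exact exp_le_exp.2 (by gcongr; exact ht.2.le)
  -- the linearisation error `e` satisfies `|e'| ≤ L |e| + L |w - ω|² E²`
  have hgron := norm_le_gronwallBound_of_norm_deriv_right_le
    (f := fun t => φ t w - φ t ω - (w - ω) * v t)
    (f' := fun t => F t (φ t w) - F t (φ t ω) - (w - ω) * (F' t (φ t ω) * v t))
    (δ := 0) (K := L) (ε := L * (|w - ω| * E) ^ 2)
    (((hφc w).sub (hφc ω)).sub (continuous_const.mul hvc)).continuousOn
    (fun t _ => (((hφ w t).sub (hφ ω t)).sub ((hv t).const_mul _)).hasDerivWithinAt)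
    (by simp [hφ0, hv0]) (fun t ht => by
      have hsplit : F t (φ t w) - F t (φ t ω) - (w - ω) * (F' t (φ t ω) * v t) =
          (F t (φ t w) - F t (φ t ω) - F' t (φ t ω) * (φ t w - φ t ω)) +
            F' t (φ t ω) * (φ t w - φ t ω - (w - ω) * v t) := by ring
      rw [Real.norm_eq_abs, Real.norm_eq_abs, hsplit]
      calc _ ≤ _ := abs_add_le _ _
        _ ≤ L * (|w - ω| * E) ^ 2 + L * |φ t w - φ t ω - (w - ω) * v t| := by
          rw [abs_mul]
          gcongr
          · exact (abs_sub_sub_mul_le_of_hasDerivAt (hF t) (hF'_lip t) _ _).trans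
              (mul_le_mul_of_nonneg_left (hclose t ht) hL)
          · exact hF'_le _ _
        _ = _ := by ring) T ⟨hT, le_rfl⟩
  rw [Real.norm_eq_abs, sub_zero, gronwallBound_zero_eq_mul] at hgron
  calc _ ≤ _ := hgron
    _ = _ := by rw [mul_pow, sq_abs]; ring

end Flow

theorem abs_sin_mul_cos_le_one (x : ℝ) : |sin x * cos x| ≤ 1 := by
  rw [abs_mul]; exact mul_le_one₀ (abs_sin_le_one x) (abs_nonneg _) (abs_cos_le_one x)

theorem abs_cos_sq_sub_sin_sq_le_one (x : ℝ) : |cos x ^ 2 - sin x ^ 2| ≤ 1 := by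
  rw [abs_le]; constructor <;> nlinarith [sin_sq_add_cos_sq x]

noncomputable def angularRate (a b c : ℝ → ℝ) (t x : ℝ) : ℝ :=
  a t * cos x ^ 2 + c t * sin x ^ 2 - 2 * b t * cos x * sin x

noncomputable def radialRate (a b c : ℝ → ℝ) (t x : ℝ) : ℝ :=
  sin x * cos x * (c t - a t) - (cos x ^ 2 - sin x ^ 2) * b t

section Rates

variable (a b c : ℝ → ℝ) (t : ℝ)

theorem angularRate_periodic : Function.Periodic (angularRate a b c t) π := fun x => by
  simp only [angularRate, cos_add_pi, sin_add_pi]; ring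

theorem radialRate_periodic : Function.Periodic (radialRate a b c t) π := fun x => by
  simp only [radialRate, cos_add_pi, sin_add_pi]; ring

theorem hasDerivAt_angularRate (x : ℝ) :
    HasDerivAt (angularRate a b c t) (2 * radialRate a b c t x) x := by
  have := ((((hasDerivAt_cos x).pow 2).const_mul (a t)).add
    (((hasDerivAt_sin x).pow 2).const_mul (c t))).sub
    (((hasDerivAt_cos x).const_mul (2 * b t)).mul (hasDerivAt_sin x))
  exact this.congr_deriv (by unfold radialRate; norm_num; ring)

theorem hasDerivAt_radialRate (x : ℝ) :
    HasDerivAt (radialRate a b c t)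
      ((cos x ^ 2 - sin x ^ 2) * (c t - a t) + 4 * sin x * cos x * b t) x := by
  have := (((hasDerivAt_sin x).mul (hasDerivAt_cos x)).mul_const (c t - a t)).sub
    ((((hasDerivAt_cos x).pow 2).sub ((hasDerivAt_sin x).pow 2)).mul_const (b t))
  exact this.congr_deriv (by norm_num; ring)

theorem abs_radialRate_le (x : ℝ) : |radialRate a b c t x| ≤ |a t| + |b t| + |c t| :=
  calc |radialRate a b c t x|
      ≤ |sin x * cos x| * (|c t| + |a t|) + |cos x ^ 2 - sin x ^ 2| * |b t| := by
        unfold radialRate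
        refine (abs_sub _ _).trans ?_
        rw [abs_mul, abs_mul, abs_mul]
        gcongr
        exact abs_sub _ _
    _ ≤ 1 * (|c t| + |a t|) + 1 * |b t| := by
        gcongr
        exacts [abs_sin_mul_cos_le_one x, abs_cos_sq_sub_sin_sq_le_one x]
    _ = _ := by ring

theorem abs_angularRate_sub_le (x y : ℝ) :
    |angularRate a b c t x - angularRate a b c t y| ≤ 2 * (|a t| + |b t| + |c t|) * |x - y| :=
  abs_sub_le_mul_of_hasDerivAt (hasDerivAt_angularRate a b c t)
    (fun z => by rw [abs_mul, abs_two]; linarith [abs_radialRate_le a b c t z]) x y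

theorem abs_radialRate_sub_le (x y : ℝ) :
    |radialRate a b c t x - radialRate a b c t y| ≤ 4 * (|a t| + |b t| + |c t|) * |x - y| := by
  refine abs_sub_le_mul_of_hasDerivAt (hasDerivAt_radialRate a b c t) (fun z => ?_) x y
  calc |(cos z ^ 2 - sin z ^ 2) * (c t - a t) + 4 * sin z * cos z * b t|
      ≤ |cos z ^ 2 - sin z ^ 2| * (|c t| + |a t|) + 4 * |sin z * cos z| * |b t| := by
        refine (abs_add_le _ _).trans (add_le_add ?_ (le_of_eq ?_))
        · rw [abs_mul]; gcongr; exact abs_sub _ _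
        · simp only [abs_mul, abs_of_pos (four_pos : (0 : ℝ) < 4)]; ring
    _ ≤ 1 * (|c t| + |a t|) + 4 * 1 * |b t| := by
        gcongr
        exacts [abs_cos_sq_sub_sin_sq_le_one z, abs_sin_mul_cos_le_one z]
    _ ≤ _ := by nlinarith [abs_nonneg (a t), abs_nonneg (b t), abs_nonneg (c t)]

end Rates

/-- `(θ t ω, r t ω)` are the polar coordinates, `z = r e^{-iθ}`, of the solution of
`J z' = S(t) z`, `J = !![0, -1; 1, 0]`, `S = !![a, b; b, c]`, with `z(0) = e^{-iω}`. -/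
structure IsPruferSolution (a b c : ℝ → ℝ) (θ r : ℝ → ℝ → ℝ) : Prop where
  angle_zero : ∀ ω, θ 0 ω = ω
  radius_zero : ∀ ω, r 0 ω = 1
  hasDerivAt_angle : ∀ ω t, HasDerivAt (θ · ω) (angularRate a b c t (θ t ω)) t
  hasDerivAt_radius : ∀ ω t, HasDerivAt (r · ω) (-r t ω * radialRate a b c t (θ t ω)) t

namespace IsPruferSolution

variable {a b c : ℝ → ℝ} {θ r : ℝ → ℝ → ℝ} {K T : ℝ}

theorem hasDerivAt_radius' (h : IsPruferSolution a b c θ r) (ω t : ℝ) :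
    HasDerivAt (r · ω) (-radialRate a b c t (θ t ω) * r t ω) t :=
  (h.hasDerivAt_radius ω t).congr_deriv (by ring)

theorem radius_pos (h : IsPruferSolution a b c θ r) (hK : ∀ t, |a t| + |b t| + |c t| ≤ K)
    (ω t : ℝ) : 0 < r t ω := by
  have hne (s : ℝ) (h0 : r s ω = 0) : False := by
    have := eq_of_hasDerivAt_mul_self (f₂ := 0)
      (fun s => by rw [abs_neg]; exact (abs_radialRate_le a b c s _).trans (hK s))
      (h.hasDerivAt_radius' ω) (fun s => (hasDerivAt_const s (0 : ℝ)).congr_deriv (by simp)) h0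
    simpa [h.radius_zero] using congrFun this 0
  by_contra! hle
  obtain ⟨s, hs⟩ := intermediate_value_univ t 0
    (continuous_iff_continuousAt.2 fun s => (h.hasDerivAt_radius' ω s).continuousAt)
    ⟨hle, by rw [h.radius_zero]; exact zero_le_one⟩
  exact hne s hs

theorem hasDerivAt_inv_radius_sq (h : IsPruferSolution a b c θ r)
    (hK : ∀ t, |a t| + |b t| + |c t| ≤ K) (ω t : ℝ) :
    HasDerivAt (fun s => (r s ω ^ 2)⁻¹) (2 * radialRate a b c t (θ t ω) * (r t ω ^ 2)⁻¹) t := by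
  have hr := (h.radius_pos hK ω t).ne'
  exact (((h.hasDerivAt_radius ω t).pow 2).inv (pow_ne_zero 2 hr)).congr_deriv
    (by simp only [Pi.pow_apply]; field_simp; ring)

theorem hasDerivAt_angle_initial (h : IsPruferSolution a b c θ r)
    (hK : ∀ t, |a t| + |b t| + |c t| ≤ K) (hT : 0 ≤ T) (ω : ℝ) :
    HasDerivAt (θ T) ((r T ω ^ 2)⁻¹) ω := by
  have hM (t : ℝ) : 0 ≤ |a t| + |b t| + |c t| := by positivity
  refine hasDerivAt_flow_of_variational (F' := fun t x => 2 * radialRate a b c t x) (L := 8 * K)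
    hT (hasDerivAt_angularRate a b c) (fun t x => ?_) (fun t x y => ?_) h.angle_zero
    h.hasDerivAt_angle (by simp [h.radius_zero]) (h.hasDerivAt_inv_radius_sq hK ω)
  · rw [abs_mul, abs_two]
    linarith [abs_radialRate_le a b c t x, hK t, hM t]
  · rw [← mul_sub, abs_mul, abs_two]
    nlinarith [abs_radialRate_sub_le a b c t x y, hK t, abs_nonneg (x - y)]

theorem angle_add_period (h : IsPruferSolution a b c θ r) (hK : ∀ t, |a t| + |b t| + |c t| ≤ K)
    (ha : Function.Periodic a T) (hb : Function.Periodic b T) (hc : Function.Periodic c T)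
    {ω : ℝ} {m : ℤ} (hm : θ T ω = ω + m * π) (t : ℝ) : θ (t + T) ω = θ t ω + m * π := by
  have hlip (s : ℝ) : LipschitzWith (2 * K).toNNReal (angularRate a b c s) :=
    LipschitzWith.of_dist_le_mul fun x y => by
      have hM : 0 ≤ |a s| + |b s| + |c s| := by positivity
      rw [Real.dist_eq, Real.dist_eq, Real.coe_toNNReal _ (by linarith [hK s])]
      exact (abs_angularRate_sub_le a b c s x y).trans (by gcongr; exact hK s)
  have hshifted (s : ℝ) : HasDerivAt (fun s => θ (s + T) ω - m * π)
      (angularRate a b c s (θ (s + T) ω - m * π)) s := by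
    have hper : angularRate a b c (s + T) = angularRate a b c s := by
      unfold angularRate; rw [ha s, hb s, hc s]
    refine (((h.hasDerivAt_angle ω (s + T)).comp_add_const s T).sub_const _).congr_deriv ?_
    rw [hper, (angularRate_periodic a b c s).sub_int_mul_eq]
  have := ODE_solution_unique_univ (v := angularRate a b c) (s := fun _ => univ) (t₀ := 0)
    (fun s => (hlip s).lipschitzOnWith) (fun s => ⟨hshifted s, trivial⟩)
    (fun s => ⟨h.hasDerivAt_angle ω s, trivial⟩) (by simp [hm, h.angle_zero])
  linarith [congrFun this t]

theorem radius_add_period (h : IsPruferSolution a b c θ r) (hK : ∀ t, |a t| + |b t| + |c t| ≤ K)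
    (ha : Function.Periodic a T) (hb : Function.Periodic b T) (hc : Function.Periodic c T)
    {ω : ℝ} {m : ℤ} (hm : ∀ t, θ (t + T) ω = θ t ω + m * π) (t : ℝ) :
    r (t + T) ω = r t ω * r T ω := by
  have hshifted (s : ℝ) : HasDerivAt (fun s => r (s + T) ω)
      (-radialRate a b c s (θ s ω) * r (s + T) ω) s := by
    have hper : radialRate a b c (s + T) = radialRate a b c s := by
      unfold radialRate; rw [ha s, hb s, hc s]
    refine (h.hasDerivAt_radius' ω (s + T)).comp_add_const s T |>.congr_deriv ?_
    rw [hper, hm, (radialRate_periodic a b c s).int_mul m]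
  have := eq_of_hasDerivAt_mul_self (t₀ := 0)
    (fun s => by rw [abs_neg]; exact (abs_radialRate_le a b c s _).trans (hK s)) hshifted
    (fun s => ((h.hasDerivAt_radius' ω s).mul_const (r T ω)).congr_deriv (by ring))
    (by simp [h.radius_zero])
  exact congrFun this t

end IsPruferSolution

theorem mul_cos_eq_cos_and_mul_sin_eq_sin_iff {ρ θ ω : ℝ} (hρ : 0 < ρ) :
    ρ * cos θ = cos ω ∧ ρ * sin θ = sin ω ↔ (∃ n : ℤ, (θ - ω) / (2 * π) = n) ∧ ρ = 1 := by
  constructor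
  · rintro ⟨hc, hs⟩
    have hρ1 : ρ = 1 := by
      refine (pow_eq_one_iff_of_nonneg hρ.le two_ne_zero).1 ?_
      linear_combination (ρ * cos θ + cos ω) * hc + (ρ * sin θ + sin ω) * hs -
        ρ ^ 2 * sin_sq_add_cos_sq θ + sin_sq_add_cos_sq ω
    subst hρ1
    obtain ⟨n, hn⟩ := Real.Angle.angle_eq_iff_two_pi_dvd_sub.1
      (Real.Angle.cos_sin_inj (by simpa using hc) (by simpa using hs))
    exact ⟨⟨n, by rw [hn]; field_simp⟩, rfl⟩
  · rintro ⟨⟨n, hn⟩, rfl⟩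
    obtain rfl : θ = ω + n * (2 * π) := by
      rw [div_eq_iff (by positivity)] at hn; linarith
    simp [cos_add_int_mul_two_pi, sin_add_int_mul_two_pi]

theorem mul_cos_eq_neg_cos_and_mul_sin_eq_neg_sin_iff {ρ θ ω : ℝ} (hρ : 0 < ρ) :
    ρ * cos θ = -cos ω ∧ ρ * sin θ = -sin ω ↔
      (∃ n : ℤ, (θ - ω) / (2 * π) = n + 1 / 2) ∧ ρ = 1 := by
  have hshift : (θ - (ω + π)) / (2 * π) = (θ - ω) / (2 * π) - 1 / 2 := by
    field_simp; ring
  simpa only [cos_add_pi, sin_add_pi, hshift, sub_eq_iff_eq_add] using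
    mul_cos_eq_cos_and_mul_sin_eq_sin_iff (θ := θ) (ω := ω + π) hρ

theorem hasDerivAt_winding_eq_zero_iff {f : ℝ → ℝ} {ρ ω : ℝ} (hf : HasDerivAt f (ρ ^ 2)⁻¹ ω)
    (hρ : 0 < ρ) : HasDerivAt (fun w => (f w - w) / (2 * π)) 0 ω ↔ ρ = 1 := by
  have hη := (hf.sub (hasDerivAt_id ω)).div_const (2 * π)
  refine ⟨fun h0 => ?_, fun h1 => by simpa [h1] using hη⟩
  have : (ρ ^ 2)⁻¹ = 1 := by
    have := hη.unique h0
    rw [div_eq_zero_iff, sub_eq_zero] at this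
    exact this.resolve_right (by positivity)
  rwa [inv_eq_one, pow_eq_one_iff_of_nonneg hρ.le two_ne_zero] at this

section Polar

variable {ϑ ρ : ℝ → ℝ} {T ω : ℝ}

theorem polar_periodic_iff (hρ : 0 < ρ T) (hϑ0 : ϑ 0 = ω) (hρ0 : ρ 0 = 1)
    (hshift : ∀ m : ℤ, ρ T = 1 → ϑ T = ω + m * π →
      ∀ t, ρ (t + T) = ρ t ∧ ϑ (t + T) = ϑ t + m * π) :
    (∀ t, ρ (t + T) * cos (ϑ (t + T)) = ρ t * cos (ϑ t) ∧
        ρ (t + T) * sin (ϑ (t + T)) = ρ t * sin (ϑ t)) ↔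
      (∃ n : ℤ, (ϑ T - ω) / (2 * π) = n) ∧ ρ T = 1 := by
  refine ⟨fun h => ?_, fun ⟨⟨n, hn⟩, h1⟩ t => ?_⟩
  · exact (mul_cos_eq_cos_and_mul_sin_eq_sin_iff hρ).1
      (by simpa only [zero_add, hϑ0, hρ0, one_mul] using h 0)
  · have hm : ϑ T = ω + ((2 * n : ℤ) : ℝ) * π := by
      rw [div_eq_iff (by positivity)] at hn; push_cast; linarith
    obtain ⟨hρt, hϑt⟩ := hshift _ h1 hm t
    rw [hρt, hϑt, show ((2 * n : ℤ) : ℝ) * π = n * (2 * π) by push_cast; ring,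
      cos_add_int_mul_two_pi, sin_add_int_mul_two_pi]
    exact ⟨rfl, rfl⟩

theorem polar_antiperiodic_iff (hρ : 0 < ρ T) (hϑ0 : ϑ 0 = ω) (hρ0 : ρ 0 = 1)
    (hshift : ∀ m : ℤ, ρ T = 1 → ϑ T = ω + m * π →
      ∀ t, ρ (t + T) = ρ t ∧ ϑ (t + T) = ϑ t + m * π) :
    (∀ t, ρ (t + T) * cos (ϑ (t + T)) = -(ρ t * cos (ϑ t)) ∧
        ρ (t + T) * sin (ϑ (t + T)) = -(ρ t * sin (ϑ t))) ↔
      (∃ n : ℤ, (ϑ T - ω) / (2 * π) = n + 1 / 2) ∧ ρ T = 1 := by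
  refine ⟨fun h => ?_, fun ⟨⟨n, hn⟩, h1⟩ t => ?_⟩
  · exact (mul_cos_eq_neg_cos_and_mul_sin_eq_neg_sin_iff hρ).1
      (by simpa only [zero_add, hϑ0, hρ0, one_mul] using h 0)
  · have hm : ϑ T = ω + ((2 * n + 1 : ℤ) : ℝ) * π := by
      rw [div_eq_iff (by positivity)] at hn; push_cast; linarith
    obtain ⟨hρt, hϑt⟩ := hshift _ h1 hm t
    rw [hρt, hϑt, show ((2 * n + 1 : ℤ) : ℝ) * π = π + n * (2 * π) by push_cast; ring,
      ← add_assoc, cos_add_int_mul_two_pi, sin_add_int_mul_two_pi, cos_add_pi, sin_add_pi]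
    exact ⟨mul_neg _ _, mul_neg _ _⟩

end Polar

/-- With `η_T(ω) = (θ(T;ω) − ω)/(2π)` the winding number of the solution
`z(t;e^{−iω}) = r e^{−iθ}` of `J z' = S(t) z`, the solution is `T`-periodic iff
`η_T(ω) ∈ ℤ` and `η_T'(ω) = 0`, and `T`-antiperiodic iff `η_T(ω) ∈ ℤ + 1/2` and
`η_T'(ω) = 0`. -/
theorem periodic_iff_winding_integer_and_critical
    (T : ℝ) (hT : 0 < T)
    (a b c : ℝ → ℝ)
    (ha : Continuous a) (hb : Continuous b) (hc : Continuous c)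
    (haper : ∀ t, a (t + T) = a t) (hbper : ∀ t, b (t + T) = b t)
    (hcper : ∀ t, c (t + T) = c t)
    (θ r : ℝ → ℝ → ℝ)
    (hθ0 : ∀ ω, θ 0 ω = ω) (hr0 : ∀ ω, r 0 ω = 1)
    (hθ : ∀ ω t, HasDerivAt (fun s => θ s ω)
      (a t * cos (θ t ω) ^ 2 + c t * sin (θ t ω) ^ 2
        - 2 * b t * cos (θ t ω) * sin (θ t ω)) t)
    (hr : ∀ ω t, HasDerivAt (fun s => r s ω)
      (- r t ω * (sin (θ t ω) * cos (θ t ω) * (c t - a t)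
        - (cos (θ t ω) ^ 2 - sin (θ t ω) ^ 2) * b t)) t) :
    ∀ ω : ℝ,
      ((∀ t, r (t + T) ω * cos (θ (t + T) ω) = r t ω * cos (θ t ω) ∧
             r (t + T) ω * sin (θ (t + T) ω) = r t ω * sin (θ t ω)) ↔
        ((∃ n : ℤ, (θ T ω - ω) / (2 * π) = n) ∧
          HasDerivAt (fun w => (θ T w - w) / (2 * π)) 0 ω)) ∧
      ((∀ t, r (t + T) ω * cos (θ (t + T) ω) = -(r t ω * cos (θ t ω)) ∧
             r (t + T) ω * sin (θ (t + T) ω) = -(r t ω * sin (θ t ω))) ↔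
        ((∃ n : ℤ, (θ T ω - ω) / (2 * π) = n + 1 / 2) ∧
          HasDerivAt (fun w => (θ T w - w) / (2 * π)) 0 ω)) := by
  intro ω
  have hsol : IsPruferSolution a b c θ r := ⟨hθ0, hr0, hθ, hr⟩
  have hM : Function.Periodic (fun t => |a t| + |b t| + |c t|) T := fun t => by
    simp only [haper t, hbper t, hcper t]
  obtain ⟨K, hK⟩ := (hM.compact_of_continuous hT.ne' (by fun_prop)).bddAbove
  have hK' (t : ℝ) : |a t| + |b t| + |c t| ≤ K := hK ⟨t, rfl⟩
  have hpos := hsol.radius_pos hK' ω T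
  have hshift (m : ℤ) (h1 : r T ω = 1) (hm : θ T ω = ω + m * π) (t : ℝ) :
      r (t + T) ω = r t ω ∧ θ (t + T) ω = θ t ω + m * π := by
    have hangle := hsol.angle_add_period hK' haper hbper hcper hm
    exact ⟨by rw [hsol.radius_add_period hK' haper hbper hcper hangle, h1, mul_one], hangle t⟩
  rw [hasDerivAt_winding_eq_zero_iff (hsol.hasDerivAt_angle_initial hK' hT.le ω) hpos]
  exact ⟨polar_periodic_iff (ϑ := (θ · ω)) (ρ := (r · ω)) hpos (hθ0 ω) (hr0 ω) hshift,
    polar_antiperiodic_iff (ϑ := (θ · ω)) (ρ := (r · ω)) hpos (hθ0 ω) (hr0 ω) hshift⟩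
end

section
/- Let ρ = lim_{k→∞} η_{kT}(ω)/k be the rotation number of the T-periodic planar linear Hamiltonian system Jz' = S(t)z. For every integer k ≥ 1 and every integer j: ρ = j/k if and only if j − 1 < η_{kT}⁻ ≤ j ≤ η_{kT}⁺ < j + 1; ρ < j/k if and only if η_{kT}⁺ < j; and ρ > j/k if and only if η_{kT}⁻ > j. -/
open Real Filter Topology

/-!
The right-hand side of the angle equation is Lipschitz in `θ` uniformly in `t` (by periodicity),
`T`-periodic in `t` and `2π`-periodic in `θ`. By uniqueness of solutions, `ω ↦ θ T ω` is monotone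
and commutes with `ω ↦ ω + 2π`, and `θ (k * T)` is its `k`-th iterate; rescaled by `2π`, it is the
lift `g` of a degree-one circle map whose translation number is `ρ`. For any such lift `f`, the
displacement `f x - x` stays strictly below each integer above `τ f` and strictly above each
integer below `τ f`, while `τ f` lies between its minimum and maximum. Applied to `f = g ^ k`,
with `τ (g ^ k) = k * ρ`, this gives all three equivalences.
-/

noncomputable def angleField (a b c : ℝ → ℝ) (t x : ℝ) : ℝ :=
  a t * cos x ^ 2 + c t * sin x ^ 2 - 2 * b t * cos x * sin x

theorem angleField_add_two_pi (a b c : ℝ → ℝ) (t x : ℝ) :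
    angleField a b c t (x + 2 * π) = angleField a b c t x := by
  simp only [angleField, cos_add_two_pi, sin_add_two_pi]

theorem angleField_add_period {a b c : ℝ → ℝ} {T : ℝ} (ha : Function.Periodic a T)
    (hb : Function.Periodic b T) (hc : Function.Periodic c T) (t x : ℝ) :
    angleField a b c (t + T) x = angleField a b c t x := by
  simp only [angleField, ha t, hb t, hc t]

theorem hasDerivAt_angleField (a b c : ℝ → ℝ) (t x : ℝ) :
    HasDerivAt (angleField a b c t)
      ((c t - a t) * sin (2 * x) - 2 * b t * cos (2 * x)) x := by
  have h : HasDerivAt (angleField a b c t) _ x :=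
    (((hasDerivAt_cos x).fun_pow 2).const_mul (a t)).fun_add
      (((hasDerivAt_sin x).fun_pow 2).const_mul (c t)) |>.fun_sub
      (((hasDerivAt_cos x).const_mul (2 * b t)).fun_mul (hasDerivAt_sin x))
  refine h.congr_deriv ?_
  rw [sin_two_mul, cos_two_mul']
  ring

theorem lipschitzWith_angleField (a b c : ℝ → ℝ) (t : ℝ) :
    LipschitzWith (‖a t‖₊ + ‖c t‖₊ + 2 * ‖b t‖₊) (angleField a b c t) := by
  refine lipschitzWith_of_nnnorm_deriv_le
    (fun x => (hasDerivAt_angleField a b c t x).differentiableAt) fun x => ?_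
  rw [(hasDerivAt_angleField a b c t x).deriv, ← NNReal.coe_le_coe]
  push_cast
  calc ‖(c t - a t) * sin (2 * x) - 2 * b t * cos (2 * x)‖
      ≤ ‖c t - a t‖ * ‖sin (2 * x)‖ + ‖2 * b t‖ * ‖cos (2 * x)‖ := by
        grw [norm_sub_le, norm_mul, norm_mul]
    _ ≤ (‖a t‖ + ‖c t‖) * 1 + 2 * ‖b t‖ * 1 := by
        gcongr
        · exact (norm_sub_le _ _).trans_eq (add_comm _ _)
        · exact abs_sin_le_one _
        · simp
        · exact abs_cos_le_one _
    _ = ‖a t‖ + ‖c t‖ + 2 * ‖b t‖ := by ring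

theorem exists_lipschitzWith_angleField {a b c : ℝ → ℝ} {T : ℝ} (hT : T ≠ 0)
    (ha : Continuous a) (hb : Continuous b) (hc : Continuous c)
    (haper : Function.Periodic a T) (hbper : Function.Periodic b T)
    (hcper : Function.Periodic c T) :
    ∃ K, ∀ t, LipschitzWith K (angleField a b c t) := by
  have hper : Function.Periodic (fun t => ‖a t‖₊ + ‖c t‖₊ + 2 * ‖b t‖₊) T := fun t => by
    simp only [haper t, hbper t, hcper t]
  obtain ⟨K, hK⟩ := (hper.compact_of_continuous hT (by fun_prop)).bddAbove
  exact ⟨K, fun t => (lipschitzWith_angleField a b c t).weaken (hK ⟨t, rfl⟩)⟩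

section Flow

variable {F : ℝ → ℝ → ℝ} {K : NNReal}

theorem eq_of_hasDerivAt_of_lipschitzWith (hF : ∀ t, LipschitzWith K (F t)) {u v : ℝ → ℝ}
    (hu : ∀ t, HasDerivAt u (F t (u t)) t) (hv : ∀ t, HasDerivAt v (F t (v t)) t) {t₀ : ℝ}
    (h : u t₀ = v t₀) : u = v :=
  ODE_solution_unique_univ (s := fun _ => Set.univ) (fun t => (hF t).lipschitzOnWith)
    (fun t => ⟨hu t, trivial⟩) (fun t => ⟨hv t, trivial⟩) h

-- Scalar solutions cannot cross: where they meet they coincide.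
theorem le_of_hasDerivAt_of_lipschitzWith (hF : ∀ t, LipschitzWith K (F t)) {u v : ℝ → ℝ}
    (hu : ∀ t, HasDerivAt u (F t (u t)) t) (hv : ∀ t, HasDerivAt v (F t (v t)) t) {t₀ : ℝ}
    (h : u t₀ ≤ v t₀) (t₁ : ℝ) : u t₁ ≤ v t₁ := by
  by_contra! h₁
  have hcont : ContinuousOn (fun t => v t - u t) (Set.uIcc t₀ t₁) :=
    HasDerivAt.continuousOn fun t _ => (hv t).sub (hu t)
  obtain ⟨s, -, hs⟩ := intermediate_value_uIcc hcont
    (Set.mem_uIcc.mpr (Or.inr ⟨by linarith, by linarith⟩) : (0 : ℝ) ∈ _)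
  have := congrFun (eq_of_hasDerivAt_of_lipschitzWith hF hu hv (t₀ := s) (by linarith)) t₁
  linarith

variable {θ : ℝ → ℝ → ℝ} (hF : ∀ t, LipschitzWith K (F t)) (hθ0 : ∀ ω, θ 0 ω = ω)
  (hθ : ∀ ω t, HasDerivAt (fun s => θ s ω) (F t (θ t ω)) t)
include hF hθ0 hθ

theorem flow_monotone (t : ℝ) : Monotone (θ t) := fun ω₁ ω₂ h =>
  le_of_hasDerivAt_of_lipschitzWith hF (hθ ω₁) (hθ ω₂) (t₀ := 0) (by rwa [hθ0, hθ0]) t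

theorem flow_add_of_periodic_space {p : ℝ} (hFp : ∀ t x, F t (x + p) = F t x) (t ω : ℝ) :
    θ t (ω + p) = θ t ω + p := by
  have hshift : ∀ s, HasDerivAt (fun s => θ s ω + p) (F s (θ s ω + p)) s := fun s => by
    rw [hFp]; exact (hθ ω s).add_const p
  exact congrFun (eq_of_hasDerivAt_of_lipschitzWith hF (hθ (ω + p)) hshift (t₀ := 0)
    (by rw [hθ0, hθ0])) t

theorem flow_add_of_periodic_time {T : ℝ} (hFT : ∀ t x, F (t + T) x = F t x) (s ω : ℝ) :
    θ (s + T) ω = θ s (θ T ω) := by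
  have hshift : ∀ r, HasDerivAt (fun r => θ (r + T) ω) (F r (θ (r + T) ω)) r := fun r => by
    rw [← hFT]; exact (hθ ω (r + T)).comp_add_const r T
  exact congrFun (eq_of_hasDerivAt_of_lipschitzWith hF hshift (hθ (θ T ω)) (t₀ := 0)
    (by rw [hθ0, zero_add])) s

theorem flow_nat_mul_eq_iterate {T : ℝ} (hFT : ∀ t x, F (t + T) x = F t x) (n : ℕ) :
    θ (n * T) = (θ T)^[n] := by
  induction n with
  | zero => funext ω; simp [hθ0]
  | succ n ih =>
    funext ω
    rw [Function.iterate_succ_apply, ← ih, Nat.cast_succ, add_one_mul,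
      flow_add_of_periodic_time hF hθ0 hθ hFT]

end Flow

namespace CircleDeg1Lift

noncomputable def rescale (p : ℝ) (hp : 0 < p) (φ : ℝ → ℝ) (hφ : Monotone φ)
    (hφp : ∀ x, φ (x + p) = φ x + p) : CircleDeg1Lift where
  toFun x := φ (p * x) / p
  monotone' _ _ h := by dsimp only; gcongr; exact hφ (by gcongr)
  map_add_one' x := by rw [mul_add, mul_one, hφp, add_div, div_self hp.ne']

theorem rescale_pow_apply_div {p : ℝ} (hp : 0 < p) {φ : ℝ → ℝ} (hφ : Monotone φ)
    (hφp : ∀ x, φ (x + p) = φ x + p) (n : ℕ) (y : ℝ) :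
    (rescale p hp φ hφ hφp ^ n) (y / p) = φ^[n] y / p := by
  have hsemiconj : Function.Semiconj (· / p) φ (rescale p hp φ hφ hφp) := fun y => by
    change φ y / p = φ (p * (y / p)) / p
    rw [mul_div_cancel₀ y hp.ne']
  rw [coe_pow]
  exact (hsemiconj.iterate_right n y).symm

theorem range_rescale_pow_apply_sub {p : ℝ} (hp : 0 < p) {φ : ℝ → ℝ} (hφ : Monotone φ)
    (hφp : ∀ x, φ (x + p) = φ x + p) (n : ℕ) :
    (Set.range fun x => (rescale p hp φ hφ hφp ^ n) x - x) =
      Set.range fun y => (φ^[n] y - y) / p := by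
  have hsurj : Function.Surjective (· / p) := fun x => ⟨x * p, mul_div_cancel_right₀ x hp.ne'⟩
  rw [← hsurj.range_comp]
  congr! 2 with y
  rw [Function.comp_apply, rescale_pow_apply_div, sub_div]

variable (f : CircleDeg1Lift) {m M : ℝ}

theorem translationNumber_lt_int_iff_of_isGreatest
    (hM : IsGreatest (Set.range fun x => f x - x) M) (j : ℤ) :
    f.translationNumber < j ↔ M < j := by
  obtain ⟨⟨x, rfl⟩, hle⟩ := hM
  refine ⟨fun h => sub_lt_iff_lt_add'.mpr (f.map_lt_of_translationNumber_lt_int h x),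
    fun h => (f.translationNumber_le_of_le_add fun y => ?_).trans_lt h⟩
  linarith [hle ⟨y, rfl⟩]

theorem int_lt_translationNumber_iff_of_isLeast
    (hm : IsLeast (Set.range fun x => f x - x) m) (j : ℤ) :
    j < f.translationNumber ↔ j < m := by
  obtain ⟨⟨x, rfl⟩, hle⟩ := hm
  refine ⟨fun h => lt_sub_iff_add_lt'.mpr (f.lt_map_of_int_lt_translationNumber h x),
    fun h => h.trans_le (f.le_translationNumber_of_add_le fun y => ?_)⟩
  linarith [hle ⟨y, rfl⟩]

theorem translationNumber_eq_int_iff_of_isLeast_of_isGreatest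
    (hm : IsLeast (Set.range fun x => f x - x) m)
    (hM : IsGreatest (Set.range fun x => f x - x) M) (j : ℤ) :
    f.translationNumber = j ↔ (j : ℝ) - 1 < m ∧ m ≤ j ∧ (j : ℝ) ≤ M ∧ M < j + 1 := by
  have hlt := f.translationNumber_lt_int_iff_of_isGreatest hM
  have hgt := f.int_lt_translationNumber_iff_of_isLeast hm
  constructor
  · intro h
    refine ⟨by exact_mod_cast (hgt (j - 1)).mp (by push_cast; linarith),
      not_lt.mp fun h' => ?_, not_lt.mp fun h' => ?_,
      by exact_mod_cast (hlt (j + 1)).mp (by push_cast; linarith)⟩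
    · linarith [(hgt j).mpr h']
    · linarith [(hlt j).mpr h']
  · rintro ⟨-, hmj, hjM, -⟩
    exact le_antisymm (not_lt.mp fun h => hmj.not_gt ((hgt j).mp h))
      (not_lt.mp fun h => hjM.not_gt ((hlt j).mp h))

end CircleDeg1Lift

/-- Let `ρ` be the rotation number of the `T`-periodic system
`J z' = S(t) z` (the limit of `η_{kT}(ω)/k`, independent of `ω`), and for each `k` let
`ηm k`, `ηM k` be the min and max over `ω` of the winding number `η_{kT}(ω)`. Then for
every `k ≥ 1` and integer `j`: `ρ = j/k` iff `j−1 < ηm k ≤ j ≤ ηM k < j+1`;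
`ρ < j/k` iff `ηM k < j`; and `ρ > j/k` iff `ηm k > j`. -/
theorem rotation_number_winding_characterization
    (T : ℝ) (hT : 0 < T)
    (a b c : ℝ → ℝ)
    (ha : Continuous a) (hb : Continuous b) (hc : Continuous c)
    (haper : ∀ t, a (t + T) = a t) (hbper : ∀ t, b (t + T) = b t)
    (hcper : ∀ t, c (t + T) = c t)
    (θ : ℝ → ℝ → ℝ)
    (hθ0 : ∀ ω, θ 0 ω = ω)
    (hθ : ∀ ω t, HasDerivAt (fun s => θ s ω)
      (a t * cos (θ t ω) ^ 2 + c t * sin (θ t ω) ^ 2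
        - 2 * b t * cos (θ t ω) * sin (θ t ω)) t)
    (ηm ηM : ℕ → ℝ)
    (hmin : ∀ k : ℕ, IsLeast (Set.range fun ω => (θ (k * T) ω - ω) / (2 * π)) (ηm k))
    (hmax : ∀ k : ℕ, IsGreatest (Set.range fun ω => (θ (k * T) ω - ω) / (2 * π)) (ηM k))
    (ρ : ℝ)
    (hρ : ∀ ω, Tendsto (fun k : ℕ => (θ (k * T) ω - ω) / (2 * π * k)) atTop (𝓝 ρ)) :
    ∀ k : ℕ, 1 ≤ k → ∀ j : ℤ,
      ((ρ = j / k) ↔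
        ((j : ℝ) - 1 < ηm k ∧ ηm k ≤ j ∧ (j : ℝ) ≤ ηM k ∧ ηM k < (j : ℝ) + 1)) ∧
      ((ρ < j / k) ↔ ηM k < j) ∧
      ((ρ > j / k) ↔ (j : ℝ) < ηm k) := by
  intro k hk j
  obtain ⟨K, hK⟩ := exists_lipschitzWith_angleField hT.ne' ha hb hc haper hbper hcper
  have hθ' : ∀ ω t, HasDerivAt (fun s => θ s ω) (angleField a b c t (θ t ω)) t := hθ
  have hiter := flow_nat_mul_eq_iterate hK hθ0 hθ' (angleField_add_period haper hbper hcper)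
  have hmono := flow_monotone hK hθ0 hθ' T
  have hper := flow_add_of_periodic_space hK hθ0 hθ' (angleField_add_two_pi a b c) T
  set g := CircleDeg1Lift.rescale (2 * π) two_pi_pos (θ T) hmono hper
  have hgρ : g.translationNumber = ρ := by
    refine tendsto_nhds_unique (g.tendsto_translationNumber 0) ((hρ 0).congr fun n => ?_)
    rw [← zero_div (2 * π), CircleDeg1Lift.rescale_pow_apply_div, ← hiter, zero_div, sub_zero,
      sub_zero, div_div, mul_comm]
  have hk0 : (0 : ℝ) < k := by exact_mod_cast hk
  have hτ : (g ^ k).translationNumber = k * ρ := by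
    rw [CircleDeg1Lift.translationNumber_pow, hgρ]
  have hrange := CircleDeg1Lift.range_rescale_pow_apply_sub two_pi_pos hmono hper k
  rw [← hiter] at hrange
  have hm : IsLeast (Set.range fun x => (g ^ k) x - x) (ηm k) := hrange ▸ hmin k
  have hM : IsGreatest (Set.range fun x => (g ^ k) x - x) (ηM k) := hrange ▸ hmax k
  rw [eq_div_iff hk0.ne', lt_div_iff₀ hk0, gt_iff_lt, div_lt_iff₀ hk0, mul_comm ρ, ← hτ,
    (g ^ k).translationNumber_eq_int_iff_of_isLeast_of_isGreatest hm hM,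
    (g ^ k).translationNumber_lt_int_iff_of_isGreatest hM,
    (g ^ k).int_lt_translationNumber_iff_of_isLeast hm]
  exact ⟨.rfl, .rfl, .rfl⟩
end

section
/- For every real numbers 0 ≤ a < b and every integer r ≥ 1, there exists k* ≥ 1 such that for every integer k ≥ k* there exist at least r distinct integers j₁ < ⋯ < j_r, each coprime with k, satisfying a·k < j_i < b·k for all i. -/
/-!
Legendre's sieve: the integers of an interval of length `N` free of the `s` prime factors `p` of `k`
number `N ∏ (1 - 1/p)` up to an error `2^s`, and `∏ (1 - 1/p) ≥ 1/(s + 1)` because the `i`-th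
smallest prime is at least `i + 1`. On `(a k, b k)`, where `N ≥ (b - a) k - 1`, this leaves at
least `r` integers once `(r + 2) 4^s ≤ (b - a) k`, and that holds for all large `k` because
`4^s / s! → 0` and `s! ≤ k`.
-/

open Finset

def siftedIoc (S : Finset ℕ) (x y : ℕ) : Finset ℕ :=
  {n ∈ Ioc x y | ∀ p ∈ S, ¬p ∣ n}

theorem siftedIoc_insert (p : ℕ) (S : Finset ℕ) (x y : ℕ) :
    siftedIoc (insert p S) x y = {n ∈ siftedIoc S x y | ¬p ∣ n} := by
  ext n
  simp only [siftedIoc, mem_filter, forall_mem_insert]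
  tauto

theorem filter_dvd_siftedIoc {p : ℕ} {S : Finset ℕ} (hp : 0 < p) (hS : ∀ q ∈ S, q.Coprime p)
    (x y : ℕ) :
    {n ∈ siftedIoc S x y | p ∣ n} = (siftedIoc S (x / p) (y / p)).image (p * ·) := by
  ext n
  simp only [siftedIoc, mem_filter, mem_image, mem_Ioc]
  constructor
  · rintro ⟨⟨⟨hxn, hny⟩, hn⟩, m, rfl⟩
    refine ⟨m, ⟨⟨(Nat.div_lt_iff_lt_mul hp).2 ?_, (Nat.le_div_iff_mul_le hp).2 ?_⟩,
      fun q hq hqm => hn q hq (hqm.mul_left p)⟩, rfl⟩ <;> linarith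
  · rintro ⟨m, ⟨⟨hxm, hmy⟩, hm⟩, rfl⟩
    refine ⟨⟨⟨?_, ?_⟩, fun q hq hqpm => hm q hq ((hS q hq).dvd_of_dvd_mul_left hqpm)⟩,
      dvd_mul_right p m⟩
    · linarith [(Nat.div_lt_iff_lt_mul hp).1 hxm]
    · linarith [(Nat.le_div_iff_mul_le hp).1 hmy]

theorem card_siftedIoc_insert {p : ℕ} {S : Finset ℕ} (hp : 0 < p) (hS : ∀ q ∈ S, q.Coprime p)
    (x y : ℕ) :
    #(siftedIoc (insert p S) x y) + #(siftedIoc S (x / p) (y / p)) = #(siftedIoc S x y) := by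
  rw [siftedIoc_insert, ← card_image_of_injective (siftedIoc S (x / p) (y / p))
      (mul_right_injective₀ hp.ne'),
    ← filter_dvd_siftedIoc hp hS, add_comm, card_filter_add_card_filter_not]

theorem abs_sub_div_sub_div_lt_one (x y p : ℕ) :
    |((y / p : ℕ) - (x / p : ℕ) : ℝ) - ((y : ℝ) - x) / p| < 1 := by
  have floor_bounds (z : ℕ) : (z : ℝ) / p - 1 < (z / p : ℕ) ∧ ((z / p : ℕ) : ℝ) ≤ z / p := by
    rw [← Nat.floor_div_eq_div (K := ℝ)]
    exact ⟨Nat.sub_one_lt_floor _, Nat.floor_le (by positivity)⟩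
  obtain ⟨hx₁, hx₂⟩ := floor_bounds x
  obtain ⟨hy₁, hy₂⟩ := floor_bounds y
  rw [abs_lt, sub_div]
  constructor <;> linarith

theorem abs_prod_one_sub_inv_le_one {S : Finset ℕ} (hS : ∀ p ∈ S, 0 < p) :
    |∏ p ∈ S, (1 - (p : ℝ)⁻¹)| ≤ 1 := by
  have hfactor (p : ℕ) (hp : p ∈ S) : 0 ≤ 1 - (p : ℝ)⁻¹ ∧ 1 - (p : ℝ)⁻¹ ≤ 1 := by
    have : (1 : ℝ) ≤ p := by exact_mod_cast hS p hp
    constructor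
    · linarith [inv_le_one_of_one_le₀ this]
    · linarith [inv_nonneg.2 (zero_le_one.trans this)]
  rw [abs_of_nonneg (prod_nonneg fun p hp => (hfactor p hp).1)]
  exact prod_le_one (fun p hp => (hfactor p hp).1) fun p hp => (hfactor p hp).2

theorem abs_card_siftedIoc_sub_le {S : Finset ℕ} (hS0 : ∀ p ∈ S, 0 < p)
    (hS : (S : Set ℕ).Pairwise Nat.Coprime) {x y : ℕ} (hxy : x ≤ y) :
    |#(siftedIoc S x y) - ((y : ℝ) - x) * ∏ p ∈ S, (1 - (p : ℝ)⁻¹)| ≤ 2 ^ #S - 1 := by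
  induction S using Finset.induction_on generalizing x y with
  | empty => simp [siftedIoc, Nat.cast_sub hxy]
  | insert p S hpS ih =>
    have hp := hS0 p (mem_insert_self p S)
    rw [coe_insert, Set.pairwise_insert] at hS
    have hS0' : ∀ q ∈ S, 0 < q := fun q hq => hS0 q (mem_insert_of_mem hq)
    have hcop : ∀ q ∈ S, q.Coprime p := fun q hq =>
      (hS.2 q hq (ne_of_mem_of_not_mem hq hpS).symm).2
    set P := ∏ q ∈ S, (1 - (q : ℝ)⁻¹)
    have hrec : (#(siftedIoc (insert p S) x y) : ℝ) =
        #(siftedIoc S x y) - #(siftedIoc S (x / p) (y / p)) := by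
      rw [← card_siftedIoc_insert hp hcop]; push_cast; ring
    have h₁ := ih hS0' hS.1 hxy
    have h₂ := ih hS0' hS.1 (Nat.div_le_div_right (c := p) hxy)
    have h₃ : |(((y / p : ℕ) - (x / p : ℕ) : ℝ) - ((y : ℝ) - x) / p) * P| ≤ 1 := by
      rw [abs_mul]
      exact mul_le_one₀ (abs_sub_div_sub_div_lt_one x y p).le (abs_nonneg _)
        (abs_prod_one_sub_inv_le_one hS0')
    rw [prod_insert hpS, card_insert_of_notMem hpS, pow_succ, hrec]
    calc _ = |(#(siftedIoc S x y) - ((y : ℝ) - x) * P)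
            - (#(siftedIoc S (x / p) (y / p)) - ((y / p : ℕ) - (x / p : ℕ) : ℝ) * P)
            - (((y / p : ℕ) - (x / p : ℕ) : ℝ) - ((y : ℝ) - x) / p) * P| := by
          congr 1; ring
      _ ≤ (2 ^ #S - 1) + (2 ^ #S - 1) + 1 :=
          (abs_sub _ _).trans (add_le_add ((abs_sub _ _).trans (add_le_add h₁ h₂)) h₃)
      _ = 2 ^ #S * 2 - 1 := by ring

theorem inv_card_add_one_le_prod_one_sub_inv {S : Finset ℕ} (hS : ∀ p ∈ S, 2 ≤ p) :
    ((#S : ℝ) + 1)⁻¹ ≤ ∏ p ∈ S, (1 - (p : ℝ)⁻¹) := by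
  induction S using Finset.induction_on_max with
  | empty => simp
  | insert a S hlt ih =>
    have haS : a ∉ S := fun h => lt_irrefl a (hlt a h)
    have hS' : ∀ p ∈ S, 2 ≤ p := fun p hp => hS p (mem_insert_of_mem hp)
    have hcard : (#S : ℝ) + 2 ≤ a := by
      have hsub : S ⊆ Ico 2 a := fun p hp => mem_Ico.2 ⟨hS' p hp, hlt p hp⟩
      have := card_le_card hsub
      have := hS a (mem_insert_self a S)
      rw [Nat.card_Ico] at *
      exact_mod_cast (by omega : #S + 2 ≤ a)
    rw [prod_insert haS, card_insert_of_notMem haS, Nat.cast_succ]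
    calc ((#S : ℝ) + 1 + 1)⁻¹ = (1 - ((#S : ℝ) + 2)⁻¹) * ((#S : ℝ) + 1)⁻¹ := by
          field_simp; ring
      _ ≤ (1 - (a : ℝ)⁻¹) * ∏ p ∈ S, (1 - (p : ℝ)⁻¹) := by
          gcongr
          · exact sub_nonneg.2 (inv_le_one_of_one_le₀ (by linarith [(#S).cast_nonneg (α := ℝ)]))
          · exact ih hS'

theorem factorial_card_le_prod {S : Finset ℕ} (hS : ∀ p ∈ S, 0 < p) :
    (#S).factorial ≤ ∏ p ∈ S, p := by
  induction S using Finset.induction_on_max with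
  | empty => simp
  | insert a S hlt ih =>
    have haS : a ∉ S := fun h => lt_irrefl a (hlt a h)
    have hcard : #S + 1 ≤ a := by
      have hsub : S ⊆ Ico 1 a := fun p hp => mem_Ico.2 ⟨hS p (mem_insert_of_mem hp), hlt p hp⟩
      have := card_le_card hsub
      have := hS a (mem_insert_self a S)
      rw [Nat.card_Ico] at *
      omega
    rw [prod_insert haS, card_insert_of_notMem haS, Nat.factorial_succ]
    exact Nat.mul_le_mul hcard (ih fun p hp => hS p (mem_insert_of_mem hp))

theorem factorial_card_primeFactors_le {k : ℕ} (hk : k ≠ 0) : (#k.primeFactors).factorial ≤ k :=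
  (factorial_card_le_prod fun _ hp => (Nat.prime_of_mem_primeFactors hp).pos).trans
    (Nat.le_of_dvd (Nat.pos_of_ne_zero hk) (Nat.prod_primeFactors_dvd k))

theorem le_card_siftedIoc {S : Finset ℕ} (hS2 : ∀ p ∈ S, 2 ≤ p)
    (hS : (S : Set ℕ).Pairwise Nat.Coprime) {x y r : ℕ}
    (hlen : ((#S : ℝ) + 1) * (r + 2 ^ #S) ≤ (y : ℝ) - x) : r ≤ #(siftedIoc S x y) := by
  have hs : (0 : ℝ) < #S + 1 := by positivity
  have hN : (0 : ℝ) < (y : ℝ) - x := lt_of_lt_of_le (by positivity) hlen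
  have hxy : x ≤ y := by exact_mod_cast (sub_pos.1 hN).le
  have hsieve := (abs_le.1 (abs_card_siftedIoc_sub_le (fun p hp => (hS2 p hp).trans_lt' two_pos)
    hS hxy)).1
  have hdensity : ((y : ℝ) - x) / (#S + 1) ≤ ((y : ℝ) - x) * ∏ p ∈ S, (1 - (p : ℝ)⁻¹) := by
    rw [div_eq_mul_inv]
    exact mul_le_mul_of_nonneg_left (inv_card_add_one_le_prod_one_sub_inv hS2) (by linarith)
  have hmain : (r : ℝ) + 2 ^ #S ≤ ((y : ℝ) - x) / (#S + 1) := by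
    rw [le_div_iff₀ hs]; linarith
  exact_mod_cast (by linarith : (r : ℝ) ≤ #(siftedIoc S x y))

theorem exists_pow_le_mul_of_factorial_le (z : ℝ) {c : ℝ} (hc : 0 < c) :
    ∃ K : ℕ, ∀ s k : ℕ, K ≤ k → s.factorial ≤ k → z ^ s ≤ c * k := by
  obtain ⟨s₀, hs₀⟩ := Filter.eventually_atTop.1
    ((FloorSemiring.tendsto_pow_div_factorial_atTop z).eventually (ge_mem_nhds hc))
  refine ⟨⌈max 1 |z| ^ s₀ / c⌉₊, fun s k hK hfact => ?_⟩
  rcases le_or_gt s₀ s with hs | hs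
  · calc z ^ s ≤ c * s.factorial := (div_le_iff₀ (by positivity)).1 (hs₀ s hs)
      _ ≤ c * k := by gcongr
  · calc z ^ s ≤ max 1 |z| ^ s :=
          (le_abs_self _).trans (by rw [abs_pow]; gcongr; exact le_max_right _ _)
      _ ≤ max 1 |z| ^ s₀ := pow_le_pow_right₀ (le_max_left _ _) hs.le
      _ ≤ c * k := by
        rw [← div_le_iff₀' hc]
        exact (Nat.le_ceil _).trans (by exact_mod_cast hK)

theorem succ_mul_add_two_pow_add_one_le (r s : ℕ) :
    (s + 1) * (r + 2 ^ s) + 1 ≤ (r + 2) * 4 ^ s := by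
  have hs : s + 1 ≤ 2 ^ s := Nat.lt_two_pow_self
  have h4 : 4 ^ s = 2 ^ s * 2 ^ s := by rw [← mul_pow]; norm_num
  have h1 : 1 ≤ 2 ^ s := Nat.one_le_two_pow
  rw [h4]
  nlinarith [Nat.mul_le_mul_right (r + 2 ^ s) hs, Nat.mul_le_mul_left (r * 2 ^ s) h1]

theorem mem_Ioc_floor_ceil_sub_one {u v : ℝ} (hu : 0 ≤ u) {n : ℕ} :
    n ∈ Ioc ⌊u⌋₊ (⌈v⌉₊ - 1) ↔ u < n ∧ (n : ℝ) < v := by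
  rw [mem_Ioc, Nat.floor_lt hu, ← Nat.lt_ceil]
  refine and_congr_right fun hn => ?_
  have : 0 < n := by exact_mod_cast hu.trans_lt hn
  omega

theorem sub_sub_one_le_ceil_sub_one_sub_floor {u v : ℝ} (hu : 0 ≤ u) :
    v - u - 1 ≤ ((⌈v⌉₊ - 1 : ℕ) : ℝ) - ⌊u⌋₊ := by
  have hv : v - 1 ≤ ((⌈v⌉₊ - 1 : ℕ) : ℝ) := by
    rcases Nat.eq_zero_or_pos ⌈v⌉₊ with h | h
    · rw [h]; linarith [Nat.ceil_eq_zero.1 h]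
    · rw [Nat.cast_sub h, Nat.cast_one]; linarith [Nat.le_ceil v]
  linarith [Nat.floor_le hu]

theorem coprime_of_mem_siftedIoc_primeFactors {k x y n : ℕ} (hk : k ≠ 0)
    (hn : n ∈ siftedIoc k.primeFactors x y) : k.Coprime n :=
  Nat.coprime_of_dvd fun p hp hpk => (mem_filter.1 hn).2 p (Nat.mem_primeFactors.2 ⟨hp, hpk, hk⟩)

theorem pairwise_coprime_primeFactors (k : ℕ) : (k.primeFactors : Set ℕ).Pairwise Nat.Coprime :=
  fun _ hp _ hq hpq =>
    (Nat.coprime_primes (Nat.prime_of_mem_primeFactors hp) (Nat.prime_of_mem_primeFactors hq)).2 hpq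

theorem coprime_integers_in_interval_general
    (a b : ℝ) (ha : 0 ≤ a) (hab : a < b) (r : ℕ) :
    ∃ kstar : ℕ, 1 ≤ kstar ∧ ∀ k : ℕ, kstar ≤ k →
      ∃ s : Finset ℤ, r ≤ s.card ∧
        ∀ j ∈ s, IsCoprime (k : ℤ) j ∧ a * k < j ∧ (j : ℝ) < b * k := by
  obtain ⟨K, hK⟩ := exists_pow_le_mul_of_factorial_le 4
    (div_pos (sub_pos.2 hab) (by positivity : (0 : ℝ) < r + 2))
  refine ⟨K + 1, le_add_self, fun k hk => ?_⟩
  have hk0 : k ≠ 0 := by omega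
  have hak : 0 ≤ a * k := mul_nonneg ha k.cast_nonneg
  set S := k.primeFactors
  have hgrowth : ((r : ℝ) + 2) * 4 ^ #S ≤ (b - a) * k := by
    have hpow := hK #S k (by omega) (factorial_card_primeFactors_le hk0)
    rw [div_mul_eq_mul_div, le_div_iff₀ (by positivity)] at hpow
    linarith
  have hlen : ((#S : ℝ) + 1) * (r + 2 ^ #S) ≤ ((⌈b * k⌉₊ - 1 : ℕ) : ℝ) - ⌊a * k⌋₊ := by
    have hinterval := sub_sub_one_le_ceil_sub_one_sub_floor (v := b * k) hak
    have hbound : ((#S : ℝ) + 1) * (r + 2 ^ #S) + 1 ≤ (r + 2) * 4 ^ #S := by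
      exact_mod_cast succ_mul_add_two_pow_add_one_le r #S
    linarith
  refine ⟨(siftedIoc S ⌊a * k⌋₊ (⌈b * k⌉₊ - 1)).map Nat.castEmbedding, ?_, ?_⟩
  · rw [card_map]
    exact le_card_siftedIoc (fun p hp => (Nat.prime_of_mem_primeFactors hp).two_le)
      (pairwise_coprime_primeFactors k) hlen
  · simp only [mem_map, Nat.castEmbedding_apply]
    rintro _ ⟨n, hn, rfl⟩
    obtain ⟨hakn, hnbk⟩ := (mem_Ioc_floor_ceil_sub_one hak).1 (mem_filter.1 hn).1
    exact ⟨Nat.isCoprime_iff_coprime.2 (coprime_of_mem_siftedIoc_primeFactors hk0 hn),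
      by exact_mod_cast hakn, by exact_mod_cast hnbk⟩

/-- For all reals `0 ≤ a < b` and every integer `r ≥ 1`, there exists
`k* ≥ 1` such that every integer `k ≥ k*` admits at least `r` distinct integers, each
coprime with `k`, lying in the open interval `(a·k, b·k)`. -/
theorem coprime_integers_in_interval
    (a b : ℝ) (ha : 0 ≤ a) (hab : a < b) (r : ℕ) (hr : 1 ≤ r) :
    ∃ kstar : ℕ, 1 ≤ kstar ∧ ∀ k : ℕ, kstar ≤ k →
      ∃ s : Finset ℤ, r ≤ s.card ∧
        ∀ j ∈ s, IsCoprime (k : ℤ) j ∧ a * k < j ∧ (j : ℝ) < b * k :=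
  coprime_integers_in_interval_general a b ha hab r
end
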